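/- arXiv:2103.03153 — 3 statements merged into one kernel-verified Lean document; each statement's English description precedes it below -/
import Mathlib

section
/- Let Γ be a set of cardinality ω_n with n ≥ 2, and let {A_α : α < ω_n} be a family of countable subsets of Γ with ⋃_α A_α = Γ. Then there exist a countable subset B ⊆ Γ and a set T ⊆ ω_n of cardinality ω_n such that the sets A_α ∖ B for α ∈ T are nonempty and pairwise disjoint. -/
universe u

open Cardinal Ordinal Set

namespace ADRHelper

theorem bdd_of_small (κ : Cardinal.{u}) (h : κ.IsRegular) (S : Set κ.ord.ToType)
    (hS : #S < κ) : ∃ b, ∀ x ∈ S, x < b := by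
  by_contra hcon
  push_neg at hcon
  have h1 := Order.cof_le (s := S) hcon
  rw [Ordinal.cof_toType, h.cof_eq] at h1
  exact absurd hS (not_lt.2 h1)

theorem le_aleph_of_lt_aleph_succ {c : Cardinal.{u}} {m : ℕ}
    (h : c < Cardinal.aleph (m + 1 : ℕ)) : c ≤ Cardinal.aleph m := by
  rcases le_or_gt ℵ₀ c with hc | hc
  · obtain ⟨o, rfl⟩ := Cardinal.mem_range_aleph_iff.2 hc
    rw [aleph_lt_aleph] at h
    have h2 : o < (m : Ordinal) + 1 := by
      rwa [show ((m + 1 : ℕ) : Ordinal) = (m : Ordinal) + 1 by push_cast; ring] at h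
    rw [Ordinal.add_one_eq_succ, Order.lt_succ_iff] at h2
    exact aleph_le_aleph.2 h2
  · exact hc.le.trans (aleph0_le_aleph _)

theorem aleph_nat_succ_regular (m : ℕ) :
    (Cardinal.aleph (m + 1 : ℕ) : Cardinal.{u}).IsRegular := by
  have := Cardinal.isRegular_aleph_succ (m : Ordinal.{u})
  rwa [show ((m + 1 : ℕ) : Ordinal) = Order.succ (m : Ordinal) by
    rw [← Ordinal.add_one_eq_succ]; push_cast; ring]

theorem mk_Iic_lt (κ : Cardinal.{u}) (hreg : κ.IsRegular) (x : κ.ord.ToType) :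
    #(Set.Iic x) < κ := by
  have h1 : #(Set.Iio x) < κ := Cardinal.mk_Iio_ord_toType x
  rw [← Set.Iio_insert]
  refine lt_of_le_of_lt (Cardinal.mk_insert_le) ?_
  exact Cardinal.add_lt_of_lt hreg.aleph0_le h1
    (lt_of_lt_of_le Cardinal.one_lt_aleph0 hreg.aleph0_le)

theorem contain (κ : Cardinal.{u}) (hreg : κ.IsRegular) :
    ∀ (m : ℕ), Cardinal.aleph m < κ → ∀ (ι Δ : Type u), κ ≤ #ι → ∀ (L : ι → Set Δ),
      (∀ i, (L i).Countable) → #Δ ≤ Cardinal.aleph m →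
      ∃ (J : Set ι) (B : Set Δ), κ ≤ #J ∧ B.Countable ∧ ∀ j ∈ J, L j ⊆ B := by
  intro m
  induction m with
  | zero =>
    intro _ ι Δ hι L _ hΔ
    have : Countable Δ := by
      rw [show ((0 : ℕ) : Ordinal) = 0 by simp, aleph_zero] at hΔ
      exact Cardinal.mk_le_aleph0_iff.1 hΔ
    exact ⟨Set.univ, Set.univ, by rwa [Cardinal.mk_univ], Set.countable_univ,
      fun j _ => Set.subset_univ _⟩
  | succ m ih =>
    intro hlt ι Δ hι L hL hΔ
    set ν : Cardinal.{u} := Cardinal.aleph (m + 1 : ℕ) with hν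
    have νreg : ν.IsRegular := aleph_nat_succ_regular m
    have hW : #(ν.ord.ToType) = ν := mk_ord_toType ν
    obtain ⟨emb⟩ : Nonempty (Δ ↪ ν.ord.ToType) :=
      Cardinal.le_def _ _ |>.mp (hΔ.trans_eq hW.symm)
    have hbd : ∀ i, ∃ b : ν.ord.ToType, ∀ x ∈ emb '' L i, x < b := by
      intro i
      refine bdd_of_small ν νreg _ ?_
      have h1 : #(emb '' L i) ≤ ℵ₀ :=
        Cardinal.mk_le_aleph0_iff.2 ((hL i).image emb).to_subtype
      refine lt_of_le_of_lt h1 ?_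
      rw [hν, ← aleph_zero]
      exact aleph_lt_aleph.2 (by exact_mod_cast Nat.succ_pos m)
    choose b hb using hbd
    obtain ⟨b₀, hfib⟩ := Cardinal.infinite_pigeonhole_card b κ hι hreg.aleph0_le
      (by rw [hreg.cof_eq, hW]; exact hlt)
    have hΔ' : #(↥(Set.Iic b₀)) ≤ Cardinal.aleph m :=
      le_aleph_of_lt_aleph_succ (mk_Iic_lt ν νreg b₀)
    set L' : ↥(b ⁻¹' {b₀}) → Set (↥(Set.Iic b₀)) :=
      fun i => (Subtype.val) ⁻¹' (emb '' L i.1) with hL'def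
    have hL' : ∀ i, (L' i).Countable :=
      fun i => (((hL i.1).image emb).preimage Subtype.val_injective)
    have hmlt : Cardinal.aleph m < κ := by
      refine lt_trans ?_ hlt
      exact aleph_lt_aleph.2 (by exact_mod_cast Nat.lt_succ_self m)
    obtain ⟨J', B', hJ', hB', hsub'⟩ := ih hmlt (↥(b ⁻¹' {b₀})) (↥(Set.Iic b₀)) hfib L' hL' hΔ'
    refine ⟨Subtype.val '' J', emb ⁻¹' (Subtype.val '' B'), ?_, ?_, ?_⟩
    · rwa [Cardinal.mk_image_eq Subtype.val_injective]
    · exact ((hB'.image _)).preimage emb.injective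
    · rintro j ⟨j', hj', rfl⟩ d hd
      have hdb : emb d < b₀ := by
        have := hb j'.1 (emb d) ⟨d, hd, rfl⟩
        rwa [j'.2] at this
      have hmem : (⟨emb d, le_of_lt hdb⟩ : ↥(Set.Iic b₀)) ∈ L' j' := by
        show emb d ∈ emb '' L j'.1
        exact ⟨d, hd, rfl⟩
      exact ⟨_, hsub' j' hj' hmem, rfl⟩


theorem core (κ : Cardinal.{u}) (hreg : κ.IsRegular)
    (h1κ : Cardinal.aleph (1 : Ordinal) < κ)
    (contain : ∀ (ι Δ : Type u), κ ≤ #ι → #Δ < κ → ∀ (L : ι → Set Δ),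
      (∀ i, (L i).Countable) →
      ∃ (J : Set ι) (B : Set Δ), κ ≤ #J ∧ B.Countable ∧ ∀ j ∈ J, L j ⊆ B)
    (A : κ.ord.ToType → Set κ.ord.ToType)
    (hA : ∀ α, (A α).Countable)
    (hcov : (⋃ α, A α) = Set.univ) :
    ∃ (B T : Set κ.ord.ToType),
      B.Countable ∧ #T = κ ∧
      (∀ α ∈ T, (A α \ B).Nonempty) ∧
      T.PairwiseDisjoint (fun α => A α \ B) := by
  classical
  have hℵ0κ : ℵ₀ < κ := by
    rw [← aleph_zero]; exact lt_trans (aleph_lt_aleph.2 zero_lt_one) h1κ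
  have hIne : Nonempty κ.ord.ToType := by
    have h0 : (0 : Cardinal) < #(κ.ord.ToType) := by
      rw [mk_ord_toType]; exact aleph0_pos.trans hℵ0κ
    exact Cardinal.mk_ne_zero_iff.1 h0.ne'
  have wo : ∀ (S : Set κ.ord.ToType), IsWellOrder S ((· < ·) : S → S → Prop) :=
    fun _ => isWellOrder_lt
  set rank : ∀ (α : κ.ord.ToType) (γ : κ.ord.ToType), γ ∈ A α → Ordinal.{u} := fun α γ h =>
    @Ordinal.typein ↥(A α) (· < ·) (wo _) ⟨γ, h⟩ with hrankdef
  have rank_lt : ∀ (α γ : κ.ord.ToType) (h : γ ∈ A α),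
      rank α γ h < (Cardinal.aleph 1).ord := by
    intro α γ h
    have h1 : rank α γ h < @Ordinal.type ↥(A α) (· < ·) (wo _) :=
      @Ordinal.typein_lt_type _ _ (wo _) _
    refine h1.trans ?_
    rw [Cardinal.lt_ord, Ordinal.card_type]
    refine lt_of_le_of_lt (Cardinal.mk_le_aleph0_iff.2 (hA α).to_subtype) ?_
    rw [← aleph_zero]; exact aleph_lt_aleph.2 zero_lt_one
  have rank_mono : ∀ (α γ δ : κ.ord.ToType) (hγ : γ ∈ A α) (hδ : δ ∈ A α), δ < γ →
      rank α δ hδ < rank α γ hγ := by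
    intro α γ δ hγ hδ hlt
    exact (@Ordinal.typein_lt_typein _ _ (wo (A α)) _ _).2 (Subtype.mk_lt_mk.2 hlt)
  have rank_inj : ∀ (α γ δ : κ.ord.ToType) (hγ : γ ∈ A α) (hδ : δ ∈ A α),
      rank α δ hδ = rank α γ hγ → δ = γ := by
    intro α γ δ hγ hδ he
    have h2 := @Ordinal.typein_injective _ _ (wo (A α)) _ _ he
    exact congrArg Subtype.val h2
  -- minimal rank
  set Sset : κ.ord.ToType → Set Ordinal.{u} :=
    fun γ => {o | ∃ α, ∃ h : γ ∈ A α, o = rank α γ h} with hSsetdef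
  have hSne : ∀ γ, (Sset γ).Nonempty := by
    intro γ
    have hγ : γ ∈ ⋃ α, A α := by rw [hcov]; trivial
    obtain ⟨α, hα⟩ := Set.mem_iUnion.1 hγ
    exact ⟨rank α γ hα, α, hα, rfl⟩
  set ρ : κ.ord.ToType → Ordinal.{u} := fun γ => sInf (Sset γ) with hρdef
  have ρ_mem : ∀ γ, ρ γ ∈ Sset γ := fun γ => csInf_mem (hSne γ)
  have ρ_le : ∀ (γ α : κ.ord.ToType) (h : γ ∈ A α), ρ γ ≤ rank α γ h :=
    fun γ α h => csInf_le' ⟨α, h, rfl⟩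
  have ρ_lt : ∀ γ, ρ γ < (Cardinal.aleph 1).ord := by
    intro γ
    obtain ⟨α, h, e⟩ := ρ_mem γ
    rw [show ρ γ = rank α γ h from e]
    exact rank_lt α γ h
  -- colors
  set iso := Ordinal.ToType.mk (o := (Cardinal.aleph 1 : Cardinal.{u}).ord) with hisodef
  set col : κ.ord.ToType → (Cardinal.aleph 1 : Cardinal.{u}).ord.ToType :=
    fun γ => iso ⟨ρ γ, ρ_lt γ⟩ with hcoldef
  have col_lt : ∀ γ δ : κ.ord.ToType, ρ γ < ρ δ → col γ < col δ := by
    intro γ δ h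
    exact iso.lt_iff_lt.2 (Subtype.mk_lt_mk.2 h)
  have col_inj : ∀ γ δ : κ.ord.ToType, col γ = col δ → ρ γ = ρ δ := by
    intro γ δ h
    exact congrArg Subtype.val (iso.injective h)
  have hWcard : #((Cardinal.aleph 1 : Cardinal.{u}).ord.ToType) = Cardinal.aleph (1 : Ordinal) :=
    mk_ord_toType _
  -- there is an unbounded color class
  have exU : ∃ w, ∀ x : κ.ord.ToType, ∃ γ, col γ = w ∧ x < γ := by
    by_contra hcon
    push_neg at hcon
    choose bw hbw using hcon
    obtain ⟨x, hx⟩ := bdd_of_small κ hreg (Set.range bw)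
      (lt_of_le_of_lt Cardinal.mk_range_le (by rw [hWcard]; exact h1κ))
    have h1 : x ≤ bw (col x) := hbw (col x) x rfl
    exact absurd (h1.trans_lt (hx _ (Set.mem_range_self _))) (lt_irrefl x)
  set U : Set ((Cardinal.aleph 1 : Cardinal.{u}).ord.ToType) :=
    {w | ∀ x : κ.ord.ToType, ∃ γ, col γ = w ∧ x < γ} with hUdef
  have hUne : U.Nonempty := exU
  have wfW : WellFounded ((· < ·) : (Cardinal.aleph 1 : Cardinal.{u}).ord.ToType →
      (Cardinal.aleph 1 : Cardinal.{u}).ord.ToType → Prop) := IsWellFounded.wf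
  set ρw := wfW.min U hUne with hρwdef
  have hρwU : ρw ∈ U := wfW.min_mem U hUne
  have hminw : ∀ w, w < ρw → w ∉ U := fun w hw hwU => wfW.not_lt_min U hwU hw
  -- bound for the small color classes
  have hbd2 : ∀ w, ∃ x : κ.ord.ToType, ∀ γ, col γ = w → w < ρw → γ ≤ x := by
    intro w
    by_cases hw : w < ρw
    · have h2 : w ∉ U := hminw w hw
      rw [hUdef, Set.mem_setOf_eq] at h2
      push_neg at h2
      obtain ⟨x, hx⟩ := h2
      exact ⟨x, fun γ hγ _ => (hx γ) hγ⟩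
    · exact ⟨Classical.arbitrary _, fun γ _ h => absurd h hw⟩
  choose b2 hb2 using hbd2
  obtain ⟨bstar, hbstar⟩ := bdd_of_small κ hreg (Set.range b2)
    (lt_of_le_of_lt Cardinal.mk_range_le (by rw [hWcard]; exact h1κ))
  have hb : ∀ γ, col γ < ρw → γ < bstar := fun γ h =>
    lt_of_le_of_lt (hb2 (col γ) γ rfl h) (hbstar _ (Set.mem_range_self _))
  -- choose witnessing sets of minimal rank
  have hαf : ∀ γ : κ.ord.ToType, ∃ α, ∃ h : γ ∈ A α, rank α γ h = ρ γ := by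
    intro γ; obtain ⟨α, h, e⟩ := ρ_mem γ; exact ⟨α, h, e.symm⟩
  choose αf hmem hrk using hαf
  -- strict bounds for each chosen set
  have hsb : ∀ γ : κ.ord.ToType, ∃ sb, ∀ δ ∈ A (αf γ), δ < sb := by
    intro γ
    exact bdd_of_small κ hreg _
      (lt_of_le_of_lt (Cardinal.mk_le_aleph0_iff.2 (hA (αf γ)).to_subtype) hℵ0κ)
  choose s hs using hsb
  -- key fact: an element of `A (αf γ)` above `bstar` is `≥ γ`, provided `col γ = ρw`
  have key : ∀ γ δ (hδ : δ ∈ A (αf γ)), col γ = ρw → bstar < δ → γ ≤ δ := by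
    intro γ δ hδ hcol hbδ
    by_contra hlt
    push_neg at hlt
    have h1 : rank (αf γ) δ hδ < rank (αf γ) γ (hmem γ) := rank_mono _ _ _ _ _ hlt
    rw [hrk γ] at h1
    have h2 : ρ δ < ρ γ := lt_of_le_of_lt (ρ_le δ (αf γ) hδ) h1
    have h3 : col δ < ρw := hcol ▸ col_lt δ γ h2
    exact absurd (hb δ h3) (not_lt.2 hbδ.le)
  -- Zorn: a maximal separated set
  set Sep : Set (Set κ.ord.ToType) := {M | (∀ γ ∈ M, col γ = ρw ∧ bstar < γ) ∧
      ∀ γ ∈ M, ∀ γ' ∈ M, γ < γ' → s γ < γ'} with hSepdef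
  obtain ⟨M, hMmax⟩ := zorn_subset Sep (by
    intro c hcS hchain
    refine ⟨⋃₀ c, ⟨?_, ?_⟩, fun t ht => Set.subset_sUnion_of_mem ht⟩
    · rintro γ ⟨t, htc, hγt⟩
      exact (hcS htc).1 γ hγt
    · rintro γ ⟨t, htc, hγt⟩ γ' ⟨t', ht'c, hγ't'⟩ hlt
      rcases hchain.total htc ht'c with hsub | hsub
      · exact (hcS ht'c).2 γ (hsub hγt) γ' hγ't' hlt
      · exact (hcS htc).2 γ hγt γ' (hsub hγ't') hlt)
  have hMSep : M ∈ Sep := hMmax.1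
  -- M has full cardinality
  have hMcard : κ ≤ #M := by
    by_contra hsmallM
    push_neg at hsmallM
    have hQ : #(M ∪ (s '' M) : Set κ.ord.ToType) < κ := by
      refine lt_of_le_of_lt (Cardinal.mk_union_le _ _) ?_
      exact Cardinal.add_lt_of_lt hreg.aleph0_le hsmallM
        (lt_of_le_of_lt Cardinal.mk_image_le hsmallM)
    obtain ⟨x, hx⟩ := bdd_of_small κ hreg _ hQ
    obtain ⟨γ0, hγ0col, hγ0gt⟩ := hρwU (max x bstar)
    have hγ0x : x < γ0 := lt_of_le_of_lt (le_max_left _ _) hγ0gt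
    have hγ0b : bstar < γ0 := lt_of_le_of_lt (le_max_right _ _) hγ0gt
    have hnotM : γ0 ∉ M := by
      intro hmem0
      exact absurd (hx γ0 (Set.mem_union_left _ hmem0)) (not_lt.2 hγ0x.le)
    have hins : insert γ0 M ∈ Sep := by
      constructor
      · rintro γ (rfl | hγM)
        · exact ⟨hγ0col, hγ0b⟩
        · exact hMSep.1 γ hγM
      · rintro γ (rfl | hγM) γ' (rfl | hγ'M) hlt
        · exact absurd hlt (lt_irrefl _)
        · have h2 : γ' < γ := lt_trans (hx γ' (Set.mem_union_left _ hγ'M)) hγ0x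
          exact absurd hlt (not_lt.2 h2.le)
        · have h2 : s γ < x := hx _ (Set.mem_union_right _ ⟨γ, hγM, rfl⟩)
          exact lt_trans h2 hγ0x
        · exact hMSep.2 γ hγM γ' hγ'M hlt
    have := hMmax.2 hins (Set.subset_insert γ0 M)
    exact hnotM (this (Set.mem_insert γ0 M))
  -- apply the containment lemma to the low parts
  have hΔcard : #(Set.Iic bstar : Set κ.ord.ToType) < κ := by
    have h1 : #(Set.Iio bstar : Set κ.ord.ToType) < κ := Cardinal.mk_Iio_ord_toType bstar
    rw [← Set.Iio_insert]
    refine lt_of_le_of_lt (Cardinal.mk_insert_le) ?_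
    exact Cardinal.add_lt_of_lt hreg.aleph0_le h1
      (lt_of_lt_of_le Cardinal.one_lt_aleph0 hreg.aleph0_le)
  obtain ⟨J, B', hJcard, hB'count, hJB⟩ := contain (↥M) (↥(Set.Iic bstar)) hMcard hΔcard
    (fun γ => (Subtype.val) ⁻¹' (A (αf ↑γ)))
    (fun γ => (hA (αf ↑γ)).preimage Subtype.val_injective)
  refine ⟨Subtype.val '' B', (fun (j : ↥M) => αf ↑j) '' J, ?_, ?_, ?_, ?_⟩
  · exact hB'count.image _
  · -- cardinality of T
    have hinjon : Set.InjOn (fun (j : ↥M) => αf ↑j) J := by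
      intro j₁ _ j₂ _ he
      have he' : αf ↑j₁ = αf ↑j₂ := he
      have hc₁ : col ↑j₁ = ρw := (hMSep.1 _ j₁.2).1
      have hc₂ : col ↑j₂ = ρw := (hMSep.1 _ j₂.2).1
      have hρeq : ρ (↑j₁ : κ.ord.ToType) = ρ ↑j₂ := col_inj _ _ (hc₁.trans hc₂.symm)
      have hmem₂ : (↑j₂ : κ.ord.ToType) ∈ A (αf ↑j₁) := by rw [he']; exact hmem _
      have hr₂ : rank (αf ↑j₁) ↑j₂ hmem₂ = ρ ↑j₂ := by
        revert hmem₂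
        rw [he']
        intro hmem₂
        exact hrk _
      have heq : (↑j₂ : κ.ord.ToType) = ↑j₁ :=
        rank_inj (αf ↑j₁) ↑j₁ ↑j₂ (hmem _) hmem₂ (by rw [hr₂, hrk, hρeq])
      exact Subtype.ext heq.symm
    rw [Cardinal.mk_image_eq_of_injOn _ _ hinjon]
    refine le_antisymm ?_ hJcard
    calc #J ≤ #(↥M) := Cardinal.mk_set_le J
      _ ≤ #(κ.ord.ToType) := Cardinal.mk_set_le M
      _ = κ := mk_ord_toType κ
  · -- nonempty
    rintro α ⟨j, hjJ, rfl⟩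
    refine ⟨↑j, hmem _, ?_⟩
    rintro ⟨x, _, hx⟩
    have hjb : bstar < ↑j := (hMSep.1 _ j.2).2
    have : (↑j : κ.ord.ToType) ≤ bstar := hx ▸ x.2
    exact absurd this (not_le.2 hjb)
  · -- pairwise disjoint
    have main : ∀ j₁ ∈ J, ∀ j₂ ∈ J, (↑j₁ : κ.ord.ToType) < ↑j₂ →
        Disjoint (A (αf ↑j₁) \ Subtype.val '' B') (A (αf ↑j₂) \ Subtype.val '' B') := by
      intro j₁ hj₁ j₂ hj₂ hlt
      rw [Set.disjoint_left]
      rintro δ ⟨hδ₁, hδB⟩ ⟨hδ₂, _⟩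
      by_cases hδb : δ ≤ bstar
      · have : (⟨δ, hδb⟩ : ↥(Set.Iic bstar)) ∈ (Subtype.val) ⁻¹' (A (αf ↑j₂)) := hδ₂
        have := hJB j₂ hj₂ this
        exact hδB ⟨_, this, rfl⟩
      · push_neg at hδb
        have h1 : (↑j₂ : κ.ord.ToType) ≤ δ := key ↑j₂ δ hδ₂ ((hMSep.1 _ j₂.2).1) hδb
        have h2 : δ < s ↑j₁ := hs (↑j₁ : κ.ord.ToType) δ hδ₁
        have h3 : s (↑j₁ : κ.ord.ToType) < ↑j₂ := hMSep.2 _ j₁.2 _ j₂.2 hlt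
        exact absurd (lt_trans h2 h3) (not_lt.2 h1)
    rintro α₁ ⟨j₁, hj₁, rfl⟩ α₂ ⟨j₂, hj₂, rfl⟩ hne
    have hjne : (↑j₁ : κ.ord.ToType) ≠ ↑j₂ := by
      intro h
      exact hne (by rw [show j₁ = j₂ from Subtype.ext h])
    rcases lt_or_gt_of_ne hjne with h | h
    · exact main j₁ hj₁ j₂ hj₂ h
    · exact (main j₂ hj₂ j₁ hj₁ h).symm


end ADRHelper

theorem ADRHelper.adr_gen.{v, w} {n : ℕ} (hn : 2 ≤ n) {Γ : Type w}
    (hΓ : Cardinal.mk Γ = Cardinal.aleph n)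
    (A : (Cardinal.aleph n : Cardinal.{v}).ord.ToType → Set Γ) (hA : ∀ α, (A α).Countable)
    (hcov : (⋃ α, A α) = Set.univ) :
    ∃ (B : Set Γ) (T : Set (Cardinal.aleph n : Cardinal.{v}).ord.ToType),
      B.Countable ∧ Cardinal.mk T = Cardinal.aleph n ∧
      (∀ α ∈ T, (A α \ B).Nonempty) ∧
      T.PairwiseDisjoint (fun α => A α \ B) := by
  classical
  obtain ⟨k, hk⟩ : ∃ k, n = k + 1 := ⟨n - 1, (Nat.succ_pred_eq_of_pos (by omega)).symm⟩
  have hreg : (Cardinal.aleph n : Cardinal.{v}).IsRegular := by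
    rw [hk]; exact ADRHelper.aleph_nat_succ_regular k
  have h1κ : Cardinal.aleph (1 : Ordinal) < (Cardinal.aleph n : Cardinal.{v}) := by
    refine aleph_lt_aleph.2 ?_
    exact_mod_cast (by omega : 1 < n)
  have hcontain : ∀ (ι Δ : Type v), (Cardinal.aleph n : Cardinal.{v}) ≤ #ι →
      Cardinal.mk Δ < Cardinal.aleph n → ∀ (L : ι → Set Δ), (∀ i, (L i).Countable) →
      ∃ (J : Set ι) (B : Set Δ), (Cardinal.aleph n : Cardinal.{v}) ≤ #J ∧ B.Countable ∧
        ∀ j ∈ J, L j ⊆ B := by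
    intro ι Δ hι hΔ L hL
    have hΔ' : #Δ ≤ Cardinal.aleph k := by
      refine ADRHelper.le_aleph_of_lt_aleph_succ ?_
      rwa [hk] at hΔ
    have hklt : Cardinal.aleph k < Cardinal.aleph n := by
      refine aleph_lt_aleph.2 ?_
      exact_mod_cast (by omega : k < n)
    exact ADRHelper.contain (Cardinal.aleph n) hreg k hklt ι Δ hι L hL hΔ'
  have hcard : Cardinal.lift.{w} #((Cardinal.aleph n : Cardinal.{v}).ord.ToType)
      = Cardinal.lift.{v} #Γ := by
    rw [mk_ord_toType, hΓ, lift_aleph, lift_aleph, Ordinal.lift_natCast, Ordinal.lift_natCast]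
  obtain ⟨g⟩ : Nonempty ((Cardinal.aleph n : Cardinal.{v}).ord.ToType ≃ Γ) :=
    Cardinal.lift_mk_eq'.mp hcard
  have hA' : ∀ α, (g ⁻¹' (A α)).Countable := fun α => (hA α).preimage g.injective
  have hcov' : (⋃ α, g ⁻¹' (A α)) = Set.univ := by
    rw [← Set.preimage_iUnion, hcov, Set.preimage_univ]
  obtain ⟨B', T, hB'c, hTcard, hne, hdisj⟩ :=
    ADRHelper.core (Cardinal.aleph n) hreg h1κ hcontain (fun α => g ⁻¹' (A α)) hA' hcov'
  refine ⟨g '' B', T, hB'c.image g, hTcard, ?_, ?_⟩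
  · intro α hα
    obtain ⟨x, hx1, hx2⟩ := hne α hα
    refine ⟨g x, hx1, ?_⟩
    rintro ⟨y, hyB', hy⟩
    exact hx2 (by rwa [← g.injective hy])
  · intro α hα β hβ hne'
    have hd : Disjoint ((g ⁻¹' (A α)) \ B') ((g ⁻¹' (A β)) \ B') := hdisj hα hβ hne'
    show Disjoint (A α \ g '' B') (A β \ g '' B')
    rw [Set.disjoint_left] at hd ⊢
    rintro δ ⟨hδA, hδB⟩ ⟨hδA', hδB'⟩
    refine hd (a := g.symm δ) ⟨?_, ?_⟩ ⟨?_, ?_⟩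
    · show g (g.symm δ) ∈ A α
      rwa [g.apply_symm_apply]
    · intro hmem
      exact hδB ⟨g.symm δ, hmem, g.apply_symm_apply δ⟩
    · show g (g.symm δ) ∈ A β
      rwa [g.apply_symm_apply]
    · intro hmem
      exact hδB' ⟨g.symm δ, hmem, g.apply_symm_apply δ⟩


/-- if `|Γ| = ω_n` (`n ≥ 2`) and `{A_α : α < ω_n}` is a family of
countable subsets of `Γ` covering `Γ`, then there are a countable `B ⊆ Γ` and
`T ⊆ ω_n` of cardinality `ω_n` such that the sets `A_α ∖ B`, `α ∈ T`, are
nonempty and pairwise disjoint. -/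
theorem almost_disjoint_refinement {n : ℕ} (hn : 2 ≤ n) {Γ : Type u}
    (hΓ : Cardinal.mk Γ = Cardinal.aleph n)
    (A : (Cardinal.aleph n).ord.ToType → Set Γ) (hA : ∀ α, (A α).Countable)
    (hcov : (⋃ α, A α) = Set.univ) :
    ∃ (B : Set Γ) (T : Set (Cardinal.aleph n).ord.ToType),
      B.Countable ∧ Cardinal.mk T = Cardinal.aleph n ∧
      (∀ α ∈ T, (A α \ B).Nonempty) ∧
      T.PairwiseDisjoint (fun α => A α \ B) :=
  ADRHelper.adr_gen hn hΓ A hA hcov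
end

section
/- Assume b > κ where κ has uncountable cofinality. Let K ⊆ ℝ^Γ be compact and suppose X ⊆ K has cardinality κ and there is a countable Γ₀ ⊆ Γ such that the sets supp(x) ∖ Γ₀ for x ∈ X are nonempty and pairwise disjoint. Then K contains a closed zero-dimensional subspace L of weight κ. -/
universe u

/-- The bounding number `𝔟`: the least cardinality of a subset of `ω^ω`
unbounded in the eventual-domination preorder. -/
noncomputable def boundingNumber : Cardinal.{0} :=
  sInf {c | ∃ A : Set (ℕ → ℕ),
    (¬ ∃ g : ℕ → ℕ, ∀ f ∈ A, ∀ᶠ m in Filter.atTop, f m ≤ g m) ∧ Cardinal.mk A = c}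

/-- A space is zero-dimensional if it has a base of clopen sets. -/
def IsZeroDim (X : Type*) [TopologicalSpace X] : Prop :=
  ∃ B : Set (Set X), (∀ U ∈ B, IsClopen U) ∧ TopologicalSpace.IsTopologicalBasis B

/-- The weight of a topological space: the least cardinality of a base. -/
noncomputable def tweight (X : Type u) [TopologicalSpace X] : Cardinal.{u} :=
  sInf {c | ∃ B : Set (Set X), TopologicalSpace.IsTopologicalBasis B ∧ Cardinal.mk B = c}

open Filter Set Cardinal TopologicalSpace


noncomputable def qseq : ℕ → ℝ := fun n => (((Denumerable.eqv ℚ).symm n : ℚ) : ℝ)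

lemma denseRange_qseq : DenseRange qseq := by
  have h1 : DenseRange ((↑) : ℚ → ℝ) := Rat.denseRange_cast
  have : Set.range qseq = Set.range ((↑) : ℚ → ℝ) := by
    ext r
    constructor
    · rintro ⟨n, rfl⟩; exact ⟨_, rfl⟩
    · rintro ⟨q, rfl⟩
      exact ⟨(Denumerable.eqv ℚ) q,
        congrArg (fun x : ℚ => (x : ℝ)) ((Denumerable.eqv ℚ).symm_apply_apply q)⟩
  unfold DenseRange
  rw [this]; exact h1

/-- closed nowhere dense sets coded by `h`. -/
def CC (h : ℕ → ℕ) : Set ℝ :=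
  {r | ∀ k, r = qseq k ∨ 1 / ((h k : ℝ) + 1) ≤ |r - qseq k|}

lemma ccode_ex (r : ℝ) (k : ℕ) : ∃ m : ℕ, r = qseq k ∨ 1 / ((m : ℝ) + 1) ≤ |r - qseq k| := by
  rcases eq_or_ne r (qseq k) with h | h
  · exact ⟨0, Or.inl h⟩
  · have hpos : 0 < |r - qseq k| := abs_pos.2 (sub_ne_zero.2 h)
    obtain ⟨n, hn⟩ := exists_nat_one_div_lt hpos
    exact ⟨n, Or.inr hn.le⟩

noncomputable def ccode (r : ℝ) (k : ℕ) : ℕ :=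
  @Nat.find _ (Classical.decPred _) (ccode_ex r k)

lemma mem_CC_of_le {r : ℝ} {h : ℕ → ℕ} (hle : ∀ k, ccode r k ≤ h k) : r ∈ CC h := by
  intro k
  have hs : r = qseq k ∨ 1 / ((ccode r k : ℝ) + 1) ≤ |r - qseq k| :=
    @Nat.find_spec _ (Classical.decPred _) (ccode_ex r k)
  rcases hs with h1 | h1
  · exact Or.inl h1
  · refine Or.inr (le_trans ?_ h1)
    apply one_div_le_one_div_of_le
    · positivity
    · have h2 : (ccode r k : ℝ) ≤ (h k : ℝ) := Nat.cast_le.2 (hle k)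
      linarith

lemma isClosed_CC (h : ℕ → ℕ) : IsClosed (CC h) := by
  have : CC h = ⋂ k, ({qseq k} ∪ {r : ℝ | 1 / ((h k : ℝ) + 1) ≤ |r - qseq k|}) := by
    ext r; simp [CC, Set.mem_iInter, Set.mem_union]
  rw [this]
  refine isClosed_iInter fun k => (isClosed_singleton.union ?_)
  exact isClosed_le continuous_const ((continuous_id.sub continuous_const).abs)

lemma exists_notmem_CC {h : ℕ → ℕ} {c d : ℝ} (hcd : c < d) :
    ∃ r ∈ Set.Ioo c d, r ∉ CC h := by
  obtain ⟨r₀, hr₀, k, hk⟩ : ∃ r₀ ∈ Set.Ioo c d, ∃ k, qseq k = r₀ := by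
    obtain ⟨x, hx⟩ := denseRange_qseq.exists_mem_open isOpen_Ioo (Set.nonempty_Ioo.2 hcd)
    exact ⟨qseq x, hx, x, rfl⟩
  set ε := min ((d - r₀)/2) (1 / (2*((h k : ℝ) + 1))) with hε
  have hεpos : 0 < ε := by
    apply lt_min
    · linarith [hr₀.2]
    · positivity
  refine ⟨r₀ + ε, ⟨by linarith [hr₀.1], ?_⟩, ?_⟩
  · have : ε ≤ (d - r₀)/2 := min_le_left _ _
    linarith
  · intro hmem
    have := hmem k
    rw [hk] at this
    rcases this with h1 | h1
    · linarith
    · have h2 : |r₀ + ε - r₀| = ε := by rw [add_sub_cancel_left, abs_of_pos hεpos]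
      rw [h2] at h1
      have h3 : ε ≤ 1 / (2*((h k : ℝ) + 1)) := min_le_right _ _
      have h4 : 1 / (2*((h k : ℝ) + 1)) < 1 / ((h k : ℝ) + 1) := by
        apply one_div_lt_one_div_of_lt
        · positivity
        · have : (0:ℝ) < (h k : ℝ) + 1 := by positivity
          linarith
      linarith

/-- complement of `CC h` meets every interval in a rational. -/
lemma exists_rat_Ioo_notmem_CC {h : ℕ → ℕ} {c d : ℝ} (hcd : c < d) :
    ∃ a : ℚ, (a : ℝ) ∈ Set.Ioo c d ∧ (a : ℝ) ∉ CC h := by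
  obtain ⟨r, hr, hrn⟩ := exists_notmem_CC (h := h) hcd
  have hopen : IsOpen ((CC h)ᶜ ∩ Set.Ioo c d) :=
    ((isClosed_CC h).isOpen_compl).inter isOpen_Ioo
  have hrmem : r ∈ (CC h)ᶜ ∩ Set.Ioo c d := ⟨hrn, hr⟩
  obtain ⟨ε, hεpos, hball⟩ := Metric.isOpen_iff.1 hopen r hrmem
  obtain ⟨a, ha1, ha2⟩ := exists_rat_btwn (show r - ε < r by linarith)
  have : (a:ℝ) ∈ Metric.ball r ε := by
    rw [Real.ball_eq_Ioo]; exact ⟨ha1, by linarith⟩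
  have := hball this
  exact ⟨a, this.2, this.1⟩

lemma pigeon {W : Type u} {κ : Cardinal.{u}} (hcof : Cardinal.aleph0 < κ.ord.cof)
    {T : Type} [Countable T] {S : Set W} (hS : Cardinal.mk S = κ) (φ : W → T) :
    ∃ t, Cardinal.mk {x | x ∈ S ∧ φ x = t} = κ := by
  have hκω : Cardinal.aleph0 < κ := lt_of_lt_of_le hcof (Ordinal.cof_ord_le κ)
  by_contra hc
  push_neg at hc
  have hlt : ∀ t, #{x | x ∈ S ∧ φ x = t} < κ := fun t =>
    lt_of_le_of_ne (hS ▸ Cardinal.mk_le_mk_of_subset (fun x hx => hx.1)) (hc t)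
  have hU : S ⊆ ⋃ t, {x | x ∈ S ∧ φ x = t} := fun x hx => mem_iUnion.2 ⟨φ x, hx, rfl⟩
  have h1 : κ ≤ #(⋃ t, {x | x ∈ S ∧ φ x = t}) := hS ▸ Cardinal.mk_le_mk_of_subset hU
  have h2 := Cardinal.mk_iUnion_le_lift (α := W) (ι := T)
    (fun t => {x | x ∈ S ∧ φ x = t})
  rw [Cardinal.lift_uzero] at h2
  have hT : Cardinal.lift.{u} #T ≤ Cardinal.aleph0 := by
    rw [← Cardinal.lift_aleph0.{u,0}]
    exact Cardinal.lift_le.2 (Cardinal.mk_le_aleph0)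
  have h3 : (⨆ t : T, Cardinal.lift.{0} #{x | x ∈ S ∧ φ x = t}) < κ := by
    apply Ordinal.iSup_lt_lift
    · exact lt_of_le_of_lt hT hcof
    · intro t; rw [Cardinal.lift_uzero]; exact hlt t
  have h4 : #(⋃ t, {x | x ∈ S ∧ φ x = t}) < κ := by
    calc #(⋃ t, {x | x ∈ S ∧ φ x = t}) ≤ _ := h2
    _ < κ := Cardinal.mul_lt_of_lt hκω.le (lt_of_le_of_lt hT hκω) h3
  exact absurd (lt_of_le_of_lt h1 h4) (lt_irrefl _)

noncomputable def Fcode {Γ : Type u} (Γ₀ : Set Γ) [Encodable ↥Γ₀] (x : Γ → ℝ) (j : ℕ) : ℕ :=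
  (Encodable.decode₂ ↥Γ₀ (Nat.unpair j).1).elim 0 (fun γ => ccode (x ↑γ) (Nat.unpair j).2)

lemma Fcode_pair {Γ : Type u} (Γ₀ : Set Γ) [Encodable ↥Γ₀] (x : Γ → ℝ) (γ : ↥Γ₀) (k : ℕ) :
    Fcode Γ₀ x (Nat.pair (Encodable.encode γ) k) = ccode (x ↑γ) k := by
  unfold Fcode
  rw [Nat.unpair_pair, Encodable.decode₂_encode]; rfl

/-- assume `𝔟 > κ` with `κ` of uncountable cofinality. If a
compact `K ⊆ ℝ^Γ` contains `κ`-many points whose supports off a fixed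
countable `Γ₀ ⊆ Γ` are nonempty and pairwise disjoint, then `K` contains a
closed zero-dimensional subspace of weight `κ`. -/
theorem closed_zerodim_subspace_of_disjoint_supports {Γ : Type u} {κ : Cardinal.{u}}
    (hcof : Cardinal.aleph0 < κ.ord.cof)
    (hb : κ < Cardinal.lift.{u} boundingNumber)
    {K : Set (Γ → ℝ)} (hK : IsCompact K)
    {X : Set (Γ → ℝ)} (hXK : X ⊆ K) (hX : Cardinal.mk X = κ)
    {Γ₀ : Set Γ} (hΓ₀ : Γ₀.Countable)
    (hne : ∀ x ∈ X, ({γ | x γ ≠ 0} \ Γ₀).Nonempty)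
    (hdisj : X.PairwiseDisjoint (fun x => {γ | x γ ≠ 0} \ Γ₀)) :
    ∃ L : Set (Γ → ℝ), L ⊆ K ∧ IsClosed L ∧ IsZeroDim ↥L ∧ tweight ↥L = κ := by
  classical
  have hκω : Cardinal.aleph0 < κ := lt_of_lt_of_le hcof (Ordinal.cof_ord_le κ)
  haveI hcnt : Countable ↥Γ₀ := hΓ₀.to_subtype
  letI hEnc : Encodable ↥Γ₀ := (Encodable.nonempty_encodable.2 hcnt).some
  -- privacy of coordinates off Γ₀
  have hpriv : ∀ γ, γ ∉ Γ₀ → ∀ x ∈ X, ∀ y ∈ X, x γ ≠ 0 → y γ ≠ 0 → x = y := by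
    intro γ hγ x hx y hy hxγ hyγ
    by_contra hxy
    have hd := hdisj hx hy hxy
    exact (Set.disjoint_left.1 hd ⟨hxγ, hγ⟩) ⟨hyγ, hγ⟩
  -- the family is dominated
  obtain ⟨g, hg⟩ : ∃ g : ℕ → ℕ, ∀ x ∈ X, ∀ᶠ m in Filter.atTop, Fcode Γ₀ x m ≤ g m := by
    by_contra hcon
    push_neg at hcon
    have hunb : ¬ ∃ g : ℕ → ℕ, ∀ f ∈ Set.range (fun s : ↥X => Fcode Γ₀ (↑s : Γ → ℝ)),
        ∀ᶠ m in Filter.atTop, f m ≤ g m := by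
      rintro ⟨g, hg'⟩
      obtain ⟨x, hxX, hx⟩ := hcon g
      exact hx ((hg' (Fcode Γ₀ x) ⟨⟨x, hxX⟩, rfl⟩).mono fun m hm => not_lt.2 hm)
    have hmem : boundingNumber ≤ #(Set.range (fun s : ↥X => Fcode Γ₀ (↑s : Γ → ℝ))) :=
      csInf_le' ⟨_, hunb, rfl⟩
    have hle : Cardinal.lift.{u} boundingNumber ≤ κ := by
      calc Cardinal.lift.{u} boundingNumber
          ≤ Cardinal.lift.{u} #(Set.range (fun s : ↥X => Fcode Γ₀ (↑s : Γ → ℝ))) :=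
            Cardinal.lift_le.2 hmem
        _ ≤ Cardinal.lift.{0} #↥X := Cardinal.mk_range_le_lift
        _ = κ := by rw [Cardinal.lift_uzero, hX]
    exact absurd hb (not_lt.2 hle)
  -- first pigeonhole : stabilize the domination threshold
  have hNex : ∀ x ∈ X, ∃ n, ∀ m, m ≥ n → Fcode Γ₀ x m ≤ g m := by
    intro x hx; exact eventually_atTop.1 (hg x hx)
  set N : (Γ → ℝ) → ℕ := fun x =>
    if h : ∃ n, ∀ m, m ≥ n → Fcode Γ₀ x m ≤ g m then h.choose else 0 with hNdef
  have hN : ∀ x ∈ X, ∀ m, m ≥ N x → Fcode Γ₀ x m ≤ g m := by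
    intro x hx m hm
    have hex := hNex x hx
    rw [hNdef] at hm
    simp only [dif_pos hex] at hm
    exact hex.choose_spec m hm
  obtain ⟨n₀, hS₁⟩ := pigeon hcof hX N
  set S₁ : Set (Γ → ℝ) := {x | x ∈ X ∧ N x = n₀} with hS₁def
  -- second pigeonhole : stabilize the initial segment
  obtain ⟨σ, hS₂⟩ := pigeon hcof hS₁ (fun x => (fun i : Fin n₀ => Fcode Γ₀ x ↑i))
  set S : Set (Γ → ℝ) := {x | x ∈ S₁ ∧ (fun i : Fin n₀ => Fcode Γ₀ x ↑i) = σ} with hSdef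
  have hSX : S ⊆ X := fun x hx => hx.1.1
  have hSκ : #↥S = κ := hS₂
  -- the dominating function
  set G : ℕ → ℕ := fun j => max (g j) (if h : j < n₀ then σ ⟨j, h⟩ else 0) with hGdef
  have hSdom : ∀ x ∈ S, ∀ j, Fcode Γ₀ x j ≤ G j := by
    intro x hx j
    by_cases hj : j < n₀
    · have : Fcode Γ₀ x j = σ ⟨j, hj⟩ := by
        have := hx.2
        exact congrFun this ⟨j, hj⟩
      rw [hGdef]
      simp only [dif_pos hj]
      exact this ▸ le_max_right _ _
    · have : Fcode Γ₀ x j ≤ g j := by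
        apply hN x hx.1.1 j
        rw [hx.1.2]
        omega
      exact le_trans this (le_max_left _ _)
  -- the nowhere dense value sets
  set E : ↥Γ₀ → Set ℝ :=
    fun γ => CC (fun k => G (Nat.pair (Encodable.encode γ) k)) with hEdef
  have hSE : ∀ x ∈ S, ∀ γ : ↥Γ₀, x ↑γ ∈ E γ := by
    intro x hx γ
    apply mem_CC_of_le
    intro k
    have := hSdom x hx (Nat.pair (Encodable.encode γ) k)
    rwa [Fcode_pair] at this
  have hEclosed : ∀ γ : ↥Γ₀, IsClosed (E γ) := fun γ => isClosed_CC _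
  have hErat : ∀ (γ : ↥Γ₀) (c d : ℝ), c < d →
      ∃ a : ℚ, (a : ℝ) ∈ Set.Ioo c d ∧ (a : ℝ) ∉ E γ := by
    intro γ c d hcd; exact exists_rat_Ioo_notmem_CC hcd
  -- structure of the closure
  have hvanish : ∀ z ∈ closure S, z ∉ S → ∀ γ, γ ∉ Γ₀ → z γ = 0 := by
    intro z hz hzS γ hγ
    by_contra h0
    set O : Set (Γ → ℝ) := (fun w => w γ) ⁻¹' (Metric.ball (z γ) |z γ|) with hOdef
    have hOopen : IsOpen O := Metric.isOpen_ball.preimage (continuous_apply γ)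
    have hzO : z ∈ O := by
      simp only [hOdef, Set.mem_preimage, Metric.mem_ball, dist_self]
      exact abs_pos.2 h0
    have hmem0 : ∀ x, x ∈ O → x γ ≠ 0 := by
      intro x hxO h0'
      simp only [hOdef, Set.mem_preimage, Metric.mem_ball, Real.dist_eq, h0'] at hxO
      rw [abs_sub_comm, sub_zero] at hxO
      exact lt_irrefl _ hxO
    obtain ⟨x₁, hx₁O, hx₁S⟩ := mem_closure_iff.1 hz O hOopen hzO
    have hx₁γ := hmem0 x₁ hx₁O
    have hzx : z ∈ closure ({x₁} : Set (Γ → ℝ)) := by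
      rw [mem_closure_iff]
      intro u hu hzu
      obtain ⟨x₂, ⟨hx₂u, hx₂O⟩, hx₂S⟩ :=
        mem_closure_iff.1 hz (u ∩ O) (hu.inter hOopen) ⟨hzu, hzO⟩
      have hx₂γ := hmem0 x₂ hx₂O
      have heq := hpriv γ hγ x₂ (hSX hx₂S) x₁ (hSX hx₁S) hx₂γ hx₁γ
      exact ⟨x₂, hx₂u, by rw [heq]; rfl⟩
    rw [closure_singleton, Set.mem_singleton_iff] at hzx
    exact hzS (hzx ▸ hx₁S)
  have hLE : ∀ z ∈ closure S, ∀ γ : ↥Γ₀, z ↑γ ∈ E γ := by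
    intro z hz γ
    have hcl : IsClosed ((fun w : Γ → ℝ => w ↑γ) ⁻¹' (E γ)) :=
      (hEclosed γ).preimage (continuous_apply _)
    have hsub : S ⊆ (fun w : Γ → ℝ => w ↑γ) ⁻¹' (E γ) := fun x hx => hSE x hx γ
    exact closure_minimal hsub hcl hz
  -- isolated points
  have hiso : ∀ x (hx : x ∈ S), IsOpen ({(⟨x, subset_closure hx⟩ : ↥(closure S))} :
      Set ↥(closure S)) := by
    intro x hx
    obtain ⟨γx, hxγx, hγx⟩ := hne x (hSX hx)
    set O : Set (Γ → ℝ) := (fun w => w γx) ⁻¹' (Metric.ball (x γx) |x γx|) with hOdef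
    have hOopen : IsOpen O := Metric.isOpen_ball.preimage (continuous_apply γx)
    have key : (Subtype.val ⁻¹' O : Set ↥(closure S)) = {⟨x, subset_closure hx⟩} := by
      ext z
      simp only [Set.mem_preimage, Set.mem_singleton_iff]
      constructor
      · intro hzO
        have hzγ : (↑z : Γ → ℝ) γx ≠ 0 := by
          intro h0'
          simp only [hOdef, Set.mem_preimage, Metric.mem_ball, Real.dist_eq, h0'] at hzO
          rw [abs_sub_comm, sub_zero] at hzO
          exact lt_irrefl _ hzO
        by_cases hzS : (↑z : Γ → ℝ) ∈ S
        · have := hpriv γx hγx (↑z) (hSX hzS) x (hSX hx) hzγ hxγx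
          exact Subtype.ext this
        · exact absurd (hvanish (↑z) z.2 hzS γx hγx) hzγ
      · rintro rfl
        simp only [hOdef, Set.mem_preimage, Metric.mem_ball, dist_self]
        exact abs_pos.2 hxγx
    rw [← key]
    exact hOopen.preimage continuous_subtype_val
  -- basic instances
  haveI hSne : Nonempty ↥S :=
    Cardinal.mk_ne_zero_iff.1 (by rw [hSκ]; exact (Cardinal.aleph0_pos.trans hκω).ne')
  haveI hSinf : Infinite ↥S := Cardinal.infinite_iff.2 (by rw [hSκ]; exact hκω.le)
  -- inclusion of S into the closure
  set incl : ↥S → ↥(closure S) := fun s => ⟨↑s, subset_closure s.2⟩ with hincl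
  have hinclinj : Function.Injective incl := by
    intro a b h
    rw [hincl] at h
    have : ((⟨↑a, subset_closure a.2⟩ : ↥(closure S)) : Γ → ℝ) =
        ((⟨↑b, subset_closure b.2⟩ : ↥(closure S)) : Γ → ℝ) := congrArg Subtype.val h
    exact Subtype.ext this
  have hisoincl : ∀ s : ↥S, IsOpen ({incl s} : Set ↥(closure S)) := by
    intro s
    rw [hincl]
    exact hiso ↑s s.2
  -- the basis
  set P : Type u := {w : Finset (↥Γ₀ × ℚ × ℚ) //
    ∀ p ∈ w, ((p.2.1 : ℝ) ∉ E p.1 ∧ (p.2.2 : ℝ) ∉ E p.1)} with hP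
  haveI : Countable P := by rw [hP]; infer_instance
  set Tset : P × Finset ↥S → Set ↥(closure S) := fun q =>
    {z | (∀ p ∈ q.1.1, ((p.2.1 : ℝ) < (↑z : Γ → ℝ) ↑p.1 ∧ (↑z : Γ → ℝ) ↑p.1 < (p.2.2 : ℝ))) ∧
      ∀ a ∈ q.2, z ≠ incl a} with hTset
  set B : Set (Set ↥(closure S)) :=
    (Set.range fun s : ↥S => ({incl s} : Set ↥(closure S))) ∪ Set.range Tset with hB
  -- each Tset is clopen
  have hTopen : ∀ q, IsOpen (Tset q) := by
    intro q
    have heq : Tset q =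
        (⋂ p ∈ q.1.1, {z : ↥(closure S) |
          (↑z : Γ → ℝ) ↑p.1 ∈ Set.Ioo ((p.2.1 : ℝ)) ((p.2.2 : ℝ))}) ∩
        (⋂ a ∈ q.2, ({incl a} : Set ↥(closure S))ᶜ) := by
      rw [hTset]
      ext z
      simp only [Set.mem_setOf_eq, Set.mem_inter_iff, Set.mem_iInter, Set.mem_compl_iff,
        Set.mem_singleton_iff, Set.mem_Ioo]
    rw [heq]
    apply IsOpen.inter
    · apply isOpen_biInter_finset
      intro p _
      exact isOpen_Ioo.preimage ((continuous_apply (↑p.1 : Γ)).comp continuous_subtype_val)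
    · apply isOpen_biInter_finset
      intro a _
      exact isClosed_singleton.isOpen_compl
  have hTclosed : ∀ q, IsClosed (Tset q) := by
    intro q
    have heq : Tset q =
        (⋂ p ∈ q.1.1, {z : ↥(closure S) |
          (↑z : Γ → ℝ) ↑p.1 ∈ Set.Icc ((p.2.1 : ℝ)) ((p.2.2 : ℝ))}) ∩
        (⋃ a ∈ q.2, ({incl a} : Set ↥(closure S)))ᶜ := by
      rw [hTset]
      ext z
      simp only [Set.mem_setOf_eq, Set.mem_inter_iff, Set.mem_iInter, Set.mem_compl_iff,
        Set.mem_iUnion, Set.mem_singleton_iff, Set.mem_Icc, not_exists]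
      constructor
      · rintro ⟨h1, h2⟩
        exact ⟨fun p hp => ⟨(h1 p hp).1.le, (h1 p hp).2.le⟩, h2⟩
      · rintro ⟨h1, h2⟩
        refine ⟨fun p hp => ?_, h2⟩
        have hmem : (↑z : Γ → ℝ) ↑p.1 ∈ E p.1 := hLE ↑z z.2 p.1
        have hv := q.1.2 p hp
        constructor
        · cases lt_or_eq_of_le (h1 p hp).1 with
          | inl h => exact h
          | inr h => exact absurd (h ▸ hmem) hv.1
        · cases lt_or_eq_of_le (h1 p hp).2 with
          | inl h => exact h
          | inr h => exact absurd (h ▸ hmem : ((p.2.2 : ℝ)) ∈ E p.1) hv.2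
    rw [heq]
    apply IsClosed.inter
    · refine isClosed_biInter fun p _ => ?_
      exact isClosed_Icc.preimage ((continuous_apply (↑p.1 : Γ)).comp continuous_subtype_val)
    · apply IsOpen.isClosed_compl
      apply isOpen_biUnion
      intro a _
      exact hisoincl a
  -- B is a topological basis
  have hBbasis : TopologicalSpace.IsTopologicalBasis B := by
    apply TopologicalSpace.isTopologicalBasis_of_isOpen_of_nhds
    · rintro u hu
      rw [hB] at hu
      rcases hu with ⟨s, rfl⟩ | ⟨q, rfl⟩
      · exact hisoincl s
      · exact hTopen q
    · intro a u hau hu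
      by_cases haS : (↑a : Γ → ℝ) ∈ S
      · refine ⟨{incl ⟨↑a, haS⟩}, Or.inl ⟨⟨↑a, haS⟩, rfl⟩, ?_, ?_⟩
        · have : incl ⟨↑a, haS⟩ = a := Subtype.ext rfl
          rw [this]; exact rfl
        · intro y hy
          rw [Set.mem_singleton_iff] at hy
          have : incl ⟨↑a, haS⟩ = a := Subtype.ext rfl
          rw [hy, this]; exact hau
      · -- a is in the "limit" part
        obtain ⟨t, ht, htu⟩ := isOpen_induced_iff.1 hu
        have hat : (↑a : Γ → ℝ) ∈ t := by rw [← htu] at hau; exact hau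
        obtain ⟨I, V, hIV, hpi⟩ := isOpen_pi_iff.1 ht _ hat
        -- choose rational interval data on Γ₀-coordinates
        have hab : ∀ γ : ↥Γ₀, ↑γ ∈ I → ∃ ab : ℚ × ℚ, ((ab.1 : ℝ) ∉ E γ) ∧
            ((ab.2 : ℝ) ∉ E γ) ∧ (ab.1 : ℝ) < (↑a : Γ → ℝ) ↑γ ∧
            (↑a : Γ → ℝ) ↑γ < (ab.2 : ℝ) ∧
            Set.Ioo ((ab.1 : ℝ)) ((ab.2 : ℝ)) ⊆ V ↑γ := by
          intro γ hγI
          obtain ⟨hVo, hVm⟩ := hIV ↑γ hγI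
          obtain ⟨ε, hε, hball⟩ := Metric.isOpen_iff.1 hVo _ hVm
          obtain ⟨p, hp1, hp2⟩ := hErat γ ((↑a : Γ → ℝ) ↑γ - ε) ((↑a : Γ → ℝ) ↑γ)
            (by linarith)
          obtain ⟨r, hr1, hr2⟩ := hErat γ ((↑a : Γ → ℝ) ↑γ) ((↑a : Γ → ℝ) ↑γ + ε)
            (by linarith)
          refine ⟨(p, r), hp2, hr2, hp1.2, hr1.1, ?_⟩
          intro y hy
          apply hball
          rw [Real.ball_eq_Ioo]
          exact ⟨lt_of_le_of_lt (by linarith [hp1.1]) hy.1,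
            lt_of_lt_of_le hy.2 (by linarith [hr1.2])⟩
        set ab : ↥Γ₀ → ℚ × ℚ := fun γ => if h : ↑γ ∈ I then (hab γ h).choose else (0, 0)
          with habdef
        have habspec : ∀ γ : ↥Γ₀, (h : ↑γ ∈ I) → ((ab γ).1 : ℝ) ∉ E γ ∧
            (((ab γ).2 : ℝ) ∉ E γ) ∧ ((ab γ).1 : ℝ) < (↑a : Γ → ℝ) ↑γ ∧
            ((↑a : Γ → ℝ) ↑γ < ((ab γ).2 : ℝ)) ∧
            Set.Ioo (((ab γ).1 : ℝ)) (((ab γ).2 : ℝ)) ⊆ V ↑γ := by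
          intro γ h
          rw [habdef]
          simp only [dif_pos h]
          obtain ⟨h1, h2, h3, h4, h5⟩ := (hab γ h).choose_spec
          exact ⟨h1, h2, h3, h4, h5⟩
        -- the finite set of coordinate constraints
        have hwsfin : ((fun γ : ↥Γ₀ => ((γ, ab γ) : ↥Γ₀ × ℚ × ℚ)) ''
            {γ : ↥Γ₀ | ↑γ ∈ I}).Finite := by
          apply Set.Finite.image
          have : {γ : ↥Γ₀ | ↑γ ∈ I} = Subtype.val ⁻¹' (↑I : Set Γ) := rfl
          rw [this]
          exact Set.Finite.preimage (Set.injOn_of_injective Subtype.val_injective)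
            I.finite_toSet
        set w : Finset (↥Γ₀ × ℚ × ℚ) := hwsfin.toFinset with hwdef
        have hwvalid : ∀ p ∈ w, ((p.2.1 : ℝ) ∉ E p.1 ∧ (p.2.2 : ℝ) ∉ E p.1) := by
          intro p hp
          rw [hwdef, Set.Finite.mem_toFinset] at hp
          obtain ⟨γ, hγ, rfl⟩ := hp
          obtain ⟨h1, h2, _, _, _⟩ := habspec γ hγ
          exact ⟨h1, h2⟩
        -- the owners of off-Γ₀ coordinates
        set own : Γ → ↥S := fun γ =>
          if h : ∃ s : ↥S, (↑s : Γ → ℝ) γ ≠ 0 then h.choose else Classical.arbitrary ↥S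
          with howndef
        have hFfin : (own '' (↑I : Set Γ)).Finite := I.finite_toSet.image own
        set Fex : Finset ↥S := hFfin.toFinset with hFexdef
        set q : P × Finset ↥S := (⟨w, hwvalid⟩, Fex) with hqdef
        refine ⟨Tset q, Or.inr ⟨q, rfl⟩, ?_, ?_⟩
        · -- a belongs to Tset q
          rw [hTset]
          constructor
          · intro p hp
            have hp' : p ∈ w := hp
            rw [hwdef, Set.Finite.mem_toFinset] at hp'
            obtain ⟨γ, hγ, rfl⟩ := hp'
            obtain ⟨_, _, h3, h4, _⟩ := habspec γ hγ
            exact ⟨h3, h4⟩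
          · intro s _ heq
            apply haS
            have : (↑a : Γ → ℝ) = ↑s := by
              rw [hincl] at heq
              exact congrArg Subtype.val heq
            rw [this]
            exact s.2
        · -- Tset q is contained in u
          intro y hy
          rw [hTset] at hy
          obtain ⟨hy1, hy2⟩ := hy
          rw [← htu]
          show (↑y : Γ → ℝ) ∈ t
          apply hpi
          intro γ hγI
          by_cases hγ0 : γ ∈ Γ₀
          · have hpmem : ((⟨γ, hγ0⟩ : ↥Γ₀), ab ⟨γ, hγ0⟩) ∈ q.1.1 := by
              rw [hqdef]
              show _ ∈ w
              rw [hwdef, Set.Finite.mem_toFinset]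
              exact ⟨⟨γ, hγ0⟩, hγI, rfl⟩
            have hbnd := hy1 _ hpmem
            obtain ⟨_, _, _, _, h5⟩ := habspec ⟨γ, hγ0⟩ hγI
            exact h5 ⟨hbnd.1, hbnd.2⟩
          · have h0V : (0 : ℝ) ∈ V γ := by
              have haγ : (↑a : Γ → ℝ) γ = 0 := hvanish ↑a a.2 haS γ hγ0
              have := (hIV γ hγI).2
              rwa [haγ] at this
            by_cases hyS : (↑y : Γ → ℝ) ∈ S
            · by_cases hy0 : (↑y : Γ → ℝ) γ = 0
              · rw [hy0]; exact h0V
              · exfalso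
                have hex : ∃ s : ↥S, (↑s : Γ → ℝ) γ ≠ 0 := ⟨⟨↑y, hyS⟩, hy0⟩
                have hownγ : own γ = hex.choose := by rw [howndef]; exact dif_pos hex
                have hownne : (↑(own γ) : Γ → ℝ) γ ≠ 0 := by
                  rw [hownγ]; exact hex.choose_spec
                have heqv : (↑(own γ) : Γ → ℝ) = ↑y :=
                  hpriv γ hγ0 ↑(own γ) (hSX (own γ).2) ↑y (hSX hyS) hownne hy0
                have hmemF : own γ ∈ q.2 := by
                  show _ ∈ Fex
                  rw [hFexdef, Set.Finite.mem_toFinset]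
                  exact ⟨γ, hγI, rfl⟩
                apply hy2 (own γ) hmemF
                apply Subtype.ext
                rw [hincl]
                show (↑y : Γ → ℝ) = ↑(own γ)
                exact heqv.symm
            · have := hvanish ↑y y.2 hyS γ hγ0
              rw [this]; exact h0V
  -- all members of B are clopen
  have hBclopen : ∀ U ∈ B, IsClopen U := by
    rintro U hU
    rw [hB] at hU
    rcases hU with ⟨s, rfl⟩ | ⟨q, rfl⟩
    · exact ⟨isClosed_singleton, hisoincl s⟩
    · exact ⟨hTclosed q, hTopen q⟩
  -- the cardinality of B
  have hBge : κ ≤ #↥B := by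
    rw [← hSκ]
    apply Cardinal.mk_le_of_injective
      (f := fun s : ↥S => (⟨{incl s}, Or.inl ⟨s, rfl⟩⟩ : ↥B))
    intro s1 s2 h
    have h2 : ({incl s1} : Set ↥(closure S)) = {incl s2} := congrArg Subtype.val h
    exact hinclinj (Set.singleton_eq_singleton_iff.1 h2)
  have hBle : #↥B ≤ κ := by
    rw [hB]
    refine le_trans (Cardinal.mk_union_le _ _) ?_
    have h1 : #↥(Set.range fun s : ↥S => ({incl s} : Set ↥(closure S))) ≤ κ := by
      refine le_trans Cardinal.mk_range_le ?_
      rw [hSκ]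
    have h2 : #↥(Set.range Tset) ≤ κ := by
      refine le_trans Cardinal.mk_range_le ?_
      have hPle : #P ≤ Cardinal.aleph0 := Cardinal.mk_le_aleph0
      have hFS : #(Finset ↥S) = κ := by rw [Cardinal.mk_finset_of_infinite, hSκ]
      calc #(P × Finset ↥S)
          = Cardinal.lift.{u} #P * Cardinal.lift.{u} #(Finset ↥S) := Cardinal.mk_prod P (Finset ↥S)
        _ = #P * #(Finset ↥S) := by rw [Cardinal.lift_id, Cardinal.lift_id]
        _ ≤ Cardinal.aleph0 * κ := mul_le_mul' hPle (le_of_eq hFS)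
        _ ≤ κ * κ := mul_le_mul' hκω.le le_rfl
        _ = κ := Cardinal.mul_eq_self hκω.le
    exact le_trans (add_le_add h1 h2) (le_of_eq (Cardinal.add_eq_self hκω.le))
  have hBcard : #↥B = κ := le_antisymm hBle hBge
  refine ⟨closure S, closure_minimal (subset_trans hSX hXK) hK.isClosed, isClosed_closure,
    ⟨B, hBclopen, hBbasis⟩, ?_⟩
  -- the weight
  unfold tweight
  apply le_antisymm
  · exact csInf_le' ⟨B, hBbasis, hBcard⟩
  · refine le_csInf ⟨κ, ⟨B, hBbasis, hBcard⟩⟩ ?_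
    rintro c ⟨B', hB', hBc'⟩
    rw [← hBc', ← hSκ]
    have hsing : ∀ s : ↥S, ({incl s} : Set ↥(closure S)) ∈ B' := by
      intro s
      obtain ⟨U, hUB, hUmem, hUsub⟩ := hB'.exists_subset_of_mem_open
        (Set.mem_singleton (incl s)) (hisoincl s)
      have hU : U = {incl s} := subset_antisymm hUsub (Set.singleton_subset_iff.2 hUmem)
      rw [← hU]
      exact hUB
    apply Cardinal.mk_le_of_injective (f := fun s : ↥S => (⟨{incl s}, hsing s⟩ : ↥B'))
    intro s1 s2 h
    exact hinclinj (Set.singleton_eq_singleton_iff.1 (congrArg Subtype.val h))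
end

section
/- Assume b > ω₁. Then every nonmetrizable compact space K in the class EC_ω contains a closed nonmetrizable zero-dimensional subspace. -/
universe u

/-- The class `EC_ω`: compact spaces embeddable in some `ℝ^Γ` so that all
supports are finite off a fixed countable set of coordinates. -/
def MemECOmega (K : Type u) [TopologicalSpace K] : Prop :=
  CompactSpace K ∧ ∃ (Γ : Type u) (f : K → Γ → ℝ) (Γ₀ : Set Γ),
    Topology.IsEmbedding f ∧ Γ₀.Countable ∧ ∀ x : K, ({γ | f x γ ≠ 0} \ Γ₀).Finite

open Set

section AuxCard

/-- Any family of at most `ℵ₁` functions is eventually dominated, assuming `ω₁ < 𝔟`. -/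
lemma aux_bounding_dominates (hb : Cardinal.aleph 1 < boundingNumber)
    {ι : Type} (F : ι → ℕ → ℕ) (hι : Cardinal.mk ι ≤ Cardinal.aleph 1) :
    ∃ g : ℕ → ℕ, ∀ i, ∀ᶠ m in Filter.atTop, F i m ≤ g m := by
  by_contra h
  have hmem : boundingNumber ≤ Cardinal.mk (Set.range F) := by
    apply csInf_le ⟨0, fun c _ => zero_le⟩
    refine ⟨Set.range F, ?_, rfl⟩
    intro ⟨g, hg⟩
    exact h ⟨g, fun i => hg (F i) (Set.mem_range_self i)⟩
  have : boundingNumber ≤ Cardinal.aleph 1 :=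
    hmem.trans ((Cardinal.mk_range_le).trans hι)
  exact absurd hb (not_lt.mpr this)

lemma aux_bounding_le_continuum : boundingNumber ≤ Cardinal.continuum := by
  have h1 : boundingNumber ≤ Cardinal.mk (Set.univ : Set (ℕ → ℕ)) := by
    apply csInf_le ⟨0, fun c _ => zero_le⟩
    refine ⟨Set.univ, ?_, rfl⟩
    rintro ⟨g, hg⟩
    have := hg (fun m => g m + 1) (Set.mem_univ _)
    rcases (Filter.eventually_atTop.mp this) with ⟨N, hN⟩
    have h' := hN N le_rfl
    have h'' : g N + 1 ≤ g N := h'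
    omega
  have h2 : Cardinal.mk (Set.univ : Set (ℕ → ℕ)) = Cardinal.continuum := by
    rw [Cardinal.mk_univ]
    have : Cardinal.mk (ℕ → ℕ) = (Cardinal.mk ℕ) ^ (Cardinal.mk ℕ) := by
      simp [Cardinal.mk_arrow]
    rw [this, Cardinal.mk_nat, Cardinal.power_self_eq le_rfl, Cardinal.two_power_aleph0]
  rwa [h2] at h1

lemma aux_aleph_one_lt_continuum (hb : Cardinal.aleph 1 < boundingNumber) :
    Cardinal.aleph 1 < Cardinal.continuum.{0} :=
  lt_of_lt_of_le hb aux_bounding_le_continuum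

end AuxCard

section AuxPigeon

lemma aux_uncountable_fiber {α β : Type*} [Countable β] {S : Set α}
    (hS : ¬ S.Countable) (F : α → β) : ∃ b, ¬ (S ∩ F ⁻¹' {b}).Countable := by
  by_contra h
  push_neg at h
  apply hS
  have hsub : S ⊆ ⋃ b : β, (S ∩ F ⁻¹' {b}) := fun a ha =>
    Set.mem_iUnion.mpr ⟨F a, ha, rfl⟩
  exact (Set.countable_iUnion h).mono hsub

lemma aux_discrete_countable {X : Type*} [TopologicalSpace X]
    [SecondCountableTopology X] {D : Set X}
    (h : ∀ x ∈ D, ∃ U : Set X, IsOpen U ∧ U ∩ D = {x}) : D.Countable := by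
  obtain ⟨b, hbc, -, hb⟩ := TopologicalSpace.exists_countable_basis X
  haveI : Countable ↥b := hbc.to_subtype
  have hsel : ∀ x : ↥D, ∃ V : ↥b, x.1 ∈ V.1 ∧ V.1 ∩ D = {x.1} := by
    rintro ⟨x, hx⟩
    obtain ⟨U, hU, hUD⟩ := h x hx
    have hxU : x ∈ U := by
      have : x ∈ ({x} : Set X) := rfl
      rw [← hUD] at this; exact this.1
    obtain ⟨V, hVb, hxV, hVU⟩ := hb.exists_subset_of_mem_open hxU hU
    refine ⟨⟨V, hVb⟩, hxV, ?_⟩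
    apply Set.Subset.antisymm
    · rw [← hUD]; exact Set.inter_subset_inter_left _ hVU
    · rintro y rfl; exact ⟨hxV, hx⟩
  choose V hV1 hV2 using hsel
  have hinj : Function.Injective V := by
    intro x y hxy
    have h1 : y.1 ∈ (V x).1 := by rw [hxy]; exact hV1 y
    have hy : y.1 ∈ (V x).1 ∩ D := ⟨h1, y.2⟩
    rw [hV2 x] at hy
    exact Subtype.ext hy.symm
  have : Countable ↥D := hinj.countable
  exact countable_coe_iff.mp this

end AuxPigeon


section AuxRec

variable {K : Type u} {Γ : Type u} (f : K → Γ → ℝ) (Γ₀ : Set Γ)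
variable {ι : Type} [LinearOrder ι]

/-- Transfinite construction of points with fresh support. -/
lemma aux_exists_rec [WellFoundedLT ι]
    (hex2 : ∀ Γ' : Set Γ, ∃ z : K,
      Γ'.Countable → ({γ | f z γ ≠ 0} \ (Γ₀ ∪ Γ')).Nonempty)
    (hΓ₀ : Γ₀.Countable)
    (hcnt : ∀ i : ι, (Set.Iio i).Countable)
    (hfin : ∀ z : K, ({γ | f z γ ≠ 0} \ Γ₀).Countable) :
    ∃ x : ι → K, ∀ i : ι,
      ({γ | f (x i) γ ≠ 0} \
        (Γ₀ ∪ ⋃ j : ↥(Set.Iio i), ({γ | f (x j.1) γ ≠ 0} \ Γ₀))).Nonempty := by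
  set F : (i : ι) → ((j : ι) → j < i → K) → K := fun i ih =>
    (hex2 (⋃ j : ↥(Set.Iio i), ({γ | f (ih j.1 j.2) γ ≠ 0} \ Γ₀))).choose with hF
  refine ⟨WellFounded.fix wellFounded_lt F, fun i => ?_⟩
  have heq : WellFounded.fix wellFounded_lt F i
      = F i (fun j _ => WellFounded.fix wellFounded_lt F j) :=
    WellFounded.fix_eq _ _ _
  rw [heq]
  have hc : (⋃ j : ↥(Set.Iio i),
      ({γ | f (WellFounded.fix wellFounded_lt F j.1) γ ≠ 0} \ Γ₀)).Countable := by
    haveI : Countable ↥(Set.Iio i) := (hcnt i).to_subtype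
    exact Set.countable_iUnion fun j => hfin _
  exact (hex2 _).choose_spec hc

end AuxRec

section AuxDiag

variable {ι : Type} [LinearOrder ι] [WellFoundedLT ι] [Nonempty ι]

lemma aux_strict_bound (hcnt : ∀ i : ι, (Set.Iio i).Countable)
    (huncnt : ¬ (Set.univ : Set ι).Countable)
    {S : Set ι} (hS : S.Countable) : ∃ b : ι, ∀ x ∈ S, x < b := by
  by_contra h
  push_neg at h
  apply huncnt
  have hsub : (Set.univ : Set ι) ⊆ ⋃ x ∈ S, Set.Iic x := by
    intro b _
    obtain ⟨y, hy, hby⟩ := h b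
    exact Set.mem_biUnion hy hby
  refine Set.Countable.mono hsub (hS.biUnion fun x _ => ?_)
  have : Set.Iic x ⊆ insert x (Set.Iio x) := fun y hy => by
    rcases eq_or_lt_of_le (hy : y ≤ x) with h1 | h1
    · exact Or.inl h1
    · exact Or.inr h1
  exact ((hcnt x).insert x).mono this

/-- The diagonal argument replacing Fodor's lemma. -/
lemma aux_exists_uncountable_level (hcnt : ∀ i : ι, (Set.Iio i).Countable)
    (huncnt : ¬ (Set.univ : Set ι).Countable)
    (R : ι → ι → Prop)
    (hmono : ∀ {δ δ' i}, δ ≤ δ' → R δ i → R δ' i)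
    (hloc : ∀ i : ι, ∃ s : Set ι, s.Finite ∧ (∀ j ∈ s, j < i) ∧
      ∀ δ : ι, (∀ j ∈ s, j ≤ δ) → R δ i) :
    ∃ δ₀ : ι, ¬ {i : ι | R δ₀ i}.Countable := by
  by_contra hall
  push_neg at hall
  -- build the diagonal sequence
  have hrec : ∀ e : ι, ∃ b : ι, e < b ∧ ∀ x, R e x → x < b := by
    intro e
    obtain ⟨b, hb⟩ := aux_strict_bound hcnt huncnt
      (((hall e).union (Set.countable_singleton e)) :
        ({i : ι | R e i} ∪ {e}).Countable)
    exact ⟨b, hb e (Or.inr rfl), fun x hx => hb x (Or.inl hx)⟩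
  choose nxt hnxt1 hnxt2 using hrec
  set e : ℕ → ι := fun n => Nat.rec (Classical.arbitrary ι) (fun _ prev => nxt prev) n with he
  have hestep : ∀ n, e n < e (n + 1) := fun n => hnxt1 (e n)
  have hemono : Monotone e := monotone_nat_of_le_succ fun n => (hestep n).le
  -- least strict upper bound
  set UB : Set ι := {b | ∀ n, e n < b} with hUB
  have hUBne : UB.Nonempty := by
    obtain ⟨b, hb⟩ := aux_strict_bound hcnt huncnt (Set.countable_range e)
    exact ⟨b, fun n => hb (e n) (Set.mem_range_self n)⟩
  set ε : ι := (wellFounded_lt (α := ι)).min UB hUBne with hε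
  have hεUB : ε ∈ UB := WellFounded.min_mem _ _ _
  have hbelow : ∀ j, j < ε → ∃ n, j ≤ e n := by
    intro j hj
    by_contra hcon
    push_neg at hcon
    have hjUB : j ∈ UB := fun n => hcon n
    exact WellFounded.not_lt_min (wellFounded_lt (α := ι)) UB hjUB hj
  obtain ⟨s, hsfin, hslt, hsR⟩ := hloc ε
  -- finite set below ε is dominated by some e n
  have hns : ∀ j : ι, ∃ n, j ∈ s → j ≤ e n := by
    intro j
    by_cases hj : j ∈ s
    · obtain ⟨n, hn⟩ := hbelow j (hslt j hj)
      exact ⟨n, fun _ => hn⟩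
    · exact ⟨0, fun h => absurd h hj⟩
  choose nf hnf using hns
  set N := hsfin.toFinset.sup nf with hN
  have hdom : ∀ j ∈ s, j ≤ e N := fun j hj =>
    (hnf j hj).trans (hemono (Finset.le_sup (hsfin.mem_toFinset.mpr hj)))
  have hRε : R (e N) ε := hsR (e N) hdom
  have h1 : ε < e (N + 1) := hnxt2 (e N) ε hRε
  exact absurd h1 (not_lt.mpr (hεUB (N + 1)).le)

end AuxDiag



/-- if `𝔟 > ω₁`, every nonmetrizable compact space in `EC_ω`
contains a closed nonmetrizable zero-dimensional subspace. -/
theorem ECOmega_zerodim_subspace (hb : Cardinal.aleph 1 < boundingNumber)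
    {K : Type u} [TopologicalSpace K] [CompactSpace K] [T2Space K]
    (hEC : MemECOmega K) (hnm : ¬ TopologicalSpace.MetrizableSpace K) :
    ∃ L : Set K, IsClosed L ∧ ¬ TopologicalSpace.MetrizableSpace ↥L ∧ IsZeroDim ↥L := by
  classical
  obtain ⟨-, Γ, f, Γ₀, hf, hΓ₀, hsupp⟩ := hEC
  -- K is nonempty
  have hKne : Nonempty K := by
    by_contra hne
    rw [not_nonempty_iff] at hne
    apply hnm
    have hcont : Continuous (fun z : K => (hne.false z).elim : K → ℝ) := by
      rw [continuous_def]
      intro s _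
      rw [Set.eq_empty_of_isEmpty ((fun z : K => ((hne.false z).elim : ℝ)) ⁻¹' s)]
      exact isOpen_empty
    have hinj : Function.Injective (fun z : K => (hne.false z).elim : K → ℝ) :=
      fun a => (hne.false a).elim
    exact (hcont.isClosedEmbedding hinj).toIsEmbedding.metrizableSpace
  by_cases hcase : ∃ Γ'' : Set Γ, Γ''.Countable ∧ Γ₀ ⊆ Γ'' ∧
      ∀ z : K, {γ | f z γ ≠ 0} ⊆ Γ''
  · -- then K is metrizable, contradiction
    exfalso
    apply hnm
    obtain ⟨Γ'', hc, -, hsub⟩ := hcase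
    haveI : Countable ↥Γ'' := hc.to_subtype
    have hcont : Continuous (fun z : K => (fun γ : ↥Γ'' => f z γ.1)) :=
      continuous_pi fun γ => (continuous_apply γ.1).comp hf.continuous
    have hinj : Function.Injective (fun z : K => (fun γ : ↥Γ'' => f z γ.1)) := by
      intro a b hab
      apply hf.injective
      funext γ
      by_cases hγ : γ ∈ Γ''
      · exact congrFun hab ⟨γ, hγ⟩
      · have ha : f a γ = 0 := by
          by_contra h0; exact hγ (hsub a h0)
        have hbz : f b γ = 0 := by
          by_contra h0; exact hγ (hsub b h0)
        rw [ha, hbz]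
    exact (hcont.isClosedEmbedding hinj).toIsEmbedding.metrizableSpace
  · push_neg at hcase
    -- hcase : for every countable superset of the countable set, some point has support outside
    set ι : Type := (Cardinal.aleph 1).ord.ToType with hι
    have hmkι : Cardinal.mk ι = Cardinal.aleph 1 := Cardinal.mk_ord_toType _
    haveI hιne : Nonempty ι := by
      rw [← Cardinal.mk_ne_zero_iff, hmkι]
      exact ne_of_gt (lt_trans Cardinal.aleph0_pos Cardinal.aleph0_lt_aleph_one)
    have hIio : ∀ i : ι, (Set.Iio i).Countable := by
      intro i
      rw [Cardinal.countable_iff_lt_aleph_one]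
      exact Cardinal.mk_Iio_ord_toType i
    have hIic : ∀ i : ι, (Set.Iic i).Countable := by
      intro i
      refine ((hIio i).insert i).mono fun y hy => ?_
      rcases eq_or_lt_of_le (Set.mem_Iic.mp hy) with h | h
      · exact Or.inl h
      · exact Or.inr h
    have huncnt : ¬ (Set.univ : Set ι).Countable := by
      intro h
      rw [Cardinal.countable_iff_lt_aleph_one, Cardinal.mk_univ, hmkι] at h
      exact lt_irrefl _ h
    have hex2 : ∀ Γ'' : Set Γ, ∃ z : K,
        Γ''.Countable → ({γ | f z γ ≠ 0} \ (Γ₀ ∪ Γ'')).Nonempty := by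
      intro Γ''
      by_cases hc : Γ''.Countable
      · obtain ⟨z, hz⟩ := hcase (Γ₀ ∪ Γ'') (hΓ₀.union hc) Set.subset_union_left
        refine ⟨z, fun _ => ?_⟩
        obtain ⟨γ, hγ1, hγ2⟩ := Set.not_subset.mp hz
        exact ⟨γ, hγ1, hγ2⟩
      · exact ⟨Classical.arbitrary K, fun h => absurd h hc⟩
    obtain ⟨x, hx⟩ := aux_exists_rec (ι := ι) f Γ₀ hex2 hΓ₀ hIio
      (fun z => (hsupp z).countable)
    set Gs : ι → Set Γ := fun i =>
      Γ₀ ∪ ⋃ j : ↥(Set.Iio i), ({γ | f (x j.1) γ ≠ 0} \ Γ₀) with hGs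
    have hx' : ∀ i : ι, ({γ | f (x i) γ ≠ 0} \ Gs i).Nonempty := hx
    set Gt : ι → Set Γ := fun δ =>
      Γ₀ ∪ ⋃ j : ↥(Set.Iic δ), ({γ | f (x j.1) γ ≠ 0} \ Γ₀) with hGt
    have hGtc : ∀ δ, (Gt δ).Countable := by
      intro δ
      haveI := (hIic δ).to_subtype
      exact hΓ₀.union (Set.countable_iUnion fun j => (hsupp (x j.1)).countable)
    have hsub : ∀ i' i : ι, i' < i → {γ | f (x i') γ ≠ 0} ⊆ Gs i := by
      intro i' i hi' γ hγ
      by_cases h0 : γ ∈ Γ₀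
      · exact Or.inl h0
      · exact Or.inr (Set.mem_iUnion.mpr ⟨⟨i', hi'⟩, hγ, h0⟩)
    have hGtsub : ∀ δ i : ι, δ < i → Gt δ ⊆ Gs i := by
      rintro δ i hδ γ (h0 | hU)
      · exact Or.inl h0
      · obtain ⟨j, hj⟩ := Set.mem_iUnion.mp hU
        exact Or.inr (Set.mem_iUnion.mpr ⟨⟨j.1, lt_of_le_of_lt j.2 hδ⟩, hj⟩)
    -- the diagonal argument
    obtain ⟨δ₀, hδ₀⟩ := aux_exists_uncountable_level hIio huncnt
      (R := fun δ i => ({γ | f (x i) γ ≠ 0} ∩ (Gs i \ Γ₀)) ⊆ Gt δ)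
      (hmono := by
        intro δ δ' i hδ hR γ hγ
        rcases hR hγ with h0 | hU
        · exact Or.inl h0
        · obtain ⟨j, hj⟩ := Set.mem_iUnion.mp hU
          exact Or.inr (Set.mem_iUnion.mpr ⟨⟨j.1, le_trans j.2 hδ⟩, hj⟩))
      (hloc := by
        intro i
        set dirt : Set Γ := {γ | f (x i) γ ≠ 0} ∩ (Gs i \ Γ₀) with hdirt
        have hdfin : dirt.Finite := (hsupp (x i)).subset fun γ hγ => ⟨hγ.1, hγ.2.2⟩
        have hch : ∀ γ : Γ, ∃ j : ι, γ ∈ dirt → j < i ∧ γ ∈ {γ' | f (x j) γ' ≠ 0} \ Γ₀ := by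
          intro γ
          by_cases hγ : γ ∈ dirt
          · rcases hγ.2.1 with h0 | hU
            · exact absurd h0 hγ.2.2
            · obtain ⟨j, hj⟩ := Set.mem_iUnion.mp hU
              exact ⟨j.1, fun _ => ⟨j.2, hj⟩⟩
          · exact ⟨Classical.arbitrary ι, fun h => absurd h hγ⟩
        choose jf hjf using hch
        refine ⟨jf '' dirt, hdfin.image jf, ?_, ?_⟩
        · rintro j ⟨γ, hγ, rfl⟩
          exact (hjf γ hγ).1
        · intro δ hδ γ hγ
          refine Or.inr (Set.mem_iUnion.mpr ⟨⟨jf γ, hδ _ (Set.mem_image_of_mem jf hγ)⟩,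
            (hjf γ hγ).2⟩))
    set S₀ : Set ι := {i | ({γ | f (x i) γ ≠ 0} ∩ (Gs i \ Γ₀)) ⊆ Gt δ₀ ∧ δ₀ < i} with hS₀
    have hS₀unc : ¬ S₀.Countable := by
      intro hc
      apply hδ₀
      have : {i : ι | ({γ | f (x i) γ ≠ 0} ∩ (Gs i \ Γ₀)) ⊆ Gt δ₀} ⊆ S₀ ∪ Set.Iic δ₀ := by
        intro i hi
        by_cases h : δ₀ < i
        · exact Or.inl ⟨hi, h⟩
        · exact Or.inr (not_lt.mp h)
      exact ((hc.union (hIic δ₀)).mono this)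
    -- the countable core
    set Γ' : Set Γ := Gt δ₀ with hΓ'
    have hΓ'c : Γ'.Countable := hGtc δ₀
    have hΓ₀Γ' : Γ₀ ⊆ Γ' := Set.subset_union_left
    have key2 : ∀ i ∈ S₀, {γ | f (x i) γ ≠ 0} \ Γ' = {γ | f (x i) γ ≠ 0} \ Gs i := by
      intro i hi
      apply Set.Subset.antisymm
      · rintro γ ⟨hγ, hγ'⟩
        refine ⟨hγ, fun hmem => hγ' ?_⟩
        by_cases h0 : γ ∈ Γ₀
        · exact hΓ₀Γ' h0
        · exact hi.1 ⟨hγ, hmem, h0⟩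
      · rintro γ ⟨hγ, hγ'⟩
        exact ⟨hγ, fun hmem => hγ' (hGtsub δ₀ i hi.2 hmem)⟩
    have hne : ∀ i ∈ S₀, ({γ | f (x i) γ ≠ 0} \ Γ').Nonempty := by
      intro i hi
      rw [key2 i hi]
      exact hx' i
    have hdisj : ∀ i ∈ S₀, ∀ i' ∈ S₀, i ≠ i' → ∀ γ : Γ,
        γ ∈ {γ' | f (x i) γ' ≠ 0} \ Γ' → γ ∉ {γ' | f (x i') γ' ≠ 0} \ Γ' := by
      have haux : ∀ i ∈ S₀, ∀ i' : ι, i' < i → ∀ γ : Γ,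
          γ ∈ {γ' | f (x i) γ' ≠ 0} \ Γ' → γ ∉ {γ' | f (x i') γ' ≠ 0} \ Γ' := by
        intro i hi i' hi' γ hγ hγ'
        rw [key2 i hi] at hγ
        exact hγ.2 (hsub i' i hi' hγ'.1)
      intro i hi i' hi' hne γ hγ hγ'
      rcases lt_or_gt_of_ne hne with h | h
      · exact haux i' hi' i h γ hγ' hγ
      · exact haux i hi i' h γ hγ hγ'
    have hxinj : Set.InjOn x S₀ := by
      intro i hi i' hi' hxx
      by_contra hnee
      obtain ⟨γ, hγ⟩ := hne i hi
      have h1 : γ ∈ {γ' | f (x i') γ' ≠ 0} \ Γ' := by rwa [← hxx]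
      exact hdisj i hi i' hi' hnee γ hγ h1
    -- Part B: the bounding-number argument
    set V : ↥Γ' → Set ℝ := fun γ => Set.range fun i : ι => f (x i) γ.1 with hV
    have hVlt : ∀ γ : ↥Γ', Cardinal.mk (V γ) < Cardinal.continuum := by
      intro γ
      refine lt_of_le_of_lt (Cardinal.mk_range_le) ?_
      rw [hmkι]
      exact aux_aleph_one_lt_continuum hb
    have hdiff : ∀ (γ : ↥Γ') (a b : ℝ), a < b → (Set.Ioo a b \ V γ).Nonempty := by
      intro γ a b hab
      rw [Set.nonempty_iff_ne_empty]
      intro hemp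
      rw [Set.diff_eq_empty] at hemp
      have := (Cardinal.mk_le_mk_of_subset hemp)
      rw [Cardinal.mk_Ioo_real hab] at this
      exact absurd (lt_of_le_of_lt this (hVlt γ)) (lt_irrefl _)
    have hd : ∀ (γ : ↥Γ') (pq : ℚ × ℚ), ∃ r : ℝ, r ∉ V γ ∧
        ((pq.1 : ℝ) < (pq.2 : ℝ) → r ∈ Set.Ioo (pq.1 : ℝ) (pq.2 : ℝ)) := by
      intro γ pq
      by_cases hpq : (pq.1 : ℝ) < (pq.2 : ℝ)
      · obtain ⟨r, hr⟩ := hdiff γ _ _ hpq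
        exact ⟨r, hr.2, fun _ => hr.1⟩
      · obtain ⟨r, hr⟩ := hdiff γ 0 1 one_pos
        exact ⟨r, hr.2, fun h => absurd h hpq⟩
    choose d hd1 hd2 using hd
    haveI hEnc : Encodable (↥Γ' × ℚ × ℚ) := by
      haveI := hΓ'c.to_subtype
      exact Encodable.ofCountable _
    set FF : ι → ℕ → ℕ := fun i m =>
      if h : ∃ p : ↥Γ' × ℚ × ℚ, Encodable.encode p = m then
        ⌈(|f (x i) h.choose.1.1 - d h.choose.1 h.choose.2|)⁻¹⌉₊ else 0 with hFF
    have hFFenc : ∀ (i : ι) (p : ↥Γ' × ℚ × ℚ),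
        FF i (Encodable.encode p) = ⌈(|f (x i) p.1.1 - d p.1 p.2|)⁻¹⌉₊ := by
      intro i p
      have hex : ∃ q : ↥Γ' × ℚ × ℚ, Encodable.encode q = Encodable.encode p := ⟨p, rfl⟩
      simp only [hFF]
      rw [dif_pos hex]
      have hcp : hex.choose = p := Encodable.encode_injective hex.choose_spec
      rw [hcp]
    obtain ⟨g, hg⟩ := aux_bounding_dominates hb FF (le_of_eq hmkι)
    have hNex : ∀ i : ι, ∃ Nn : ℕ, ∀ m ≥ Nn, FF i m ≤ g m := fun i =>
      Filter.eventually_atTop.mp (hg i)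
    choose N hN using hNex
    set G : ι → ℕ × List ℕ := fun i => (N i, (List.range (N i)).map (FF i)) with hG
    obtain ⟨cc, hW⟩ := aux_uncountable_fiber hS₀unc G
    set W : Set ι := S₀ ∩ G ⁻¹' {cc} with hWdef
    have hWS₀ : W ⊆ S₀ := Set.inter_subset_left
    have hWne : W.Nonempty := by
      rw [Set.nonempty_iff_ne_empty]
      intro h
      rw [h] at hW
      exact hW Set.countable_empty
    obtain ⟨i0, hi0⟩ := hWne
    have hlist : ∀ i ∈ W, N i = N i0 ∧
        (List.range (N i)).map (FF i) = (List.range (N i0)).map (FF i0) := by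
      intro i hi
      have h1 : G i = cc := hi.2
      have h2 : G i0 = cc := hi0.2
      have h3 : G i = G i0 := h1.trans h2.symm
      rw [hG] at h3
      exact ⟨congrArg Prod.fst h3, congrArg Prod.snd h3⟩
    have hagree : ∀ i ∈ W, ∀ m < N i0, FF i m = FF i0 m := by
      intro i hi m hm
      obtain ⟨hN0, hl⟩ := hlist i hi
      have h1 : ((List.range (N i)).map (FF i))[m]? = ((List.range (N i0)).map (FF i0))[m]? := by
        rw [hl]
      have hm' : m < N i := hN0 ▸ hm
      rw [List.getElem?_map, List.getElem?_map, List.getElem?_range hm, List.getElem?_range hm']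
        at h1
      simpa using h1
    set hh : ℕ → ℕ := fun m => max (g m) (FF i0 m) with hhh
    have hWh : ∀ i ∈ W, ∀ m : ℕ, FF i m ≤ hh m := by
      intro i hi m
      by_cases hm : m < N i0
      · rw [hagree i hi m hm]
        exact le_max_right _ _
      · have : m ≥ N i := by rw [(hlist i hi).1]; omega
        exact (hN i m this).trans (le_max_left _ _)
    set B : Set K := x '' W with hB
    set L : Set K := closure B with hL
    have hBL : B ⊆ L := subset_closure
    have hcoord : ∀ γ : Γ, Continuous fun z : K => f z γ := fun γ =>
      (continuous_apply γ).comp hf.continuous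
    have hmargin : ∀ (γ : ↥Γ') (pq : ℚ × ℚ), ∀ z ∈ L,
        ((hh (Encodable.encode (γ, pq)) : ℝ) + 1)⁻¹ ≤ |f z γ.1 - d γ pq| := by
      intro γ pq
      set m0 := Encodable.encode (γ, pq) with hm0
      have hcl : IsClosed {z : K | ((hh m0 : ℝ) + 1)⁻¹ ≤ |f z γ.1 - d γ pq|} :=
        isClosed_le continuous_const (((hcoord γ.1).sub continuous_const).abs)
      have hBin : B ⊆ {z : K | ((hh m0 : ℝ) + 1)⁻¹ ≤ |f z γ.1 - d γ pq|} := by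
        rintro _ ⟨i, hi, rfl⟩
        have ht0 : 0 < |f (x i) γ.1 - d γ pq| := by
          rw [abs_pos, sub_ne_zero]
          intro hEq
          exact hd1 γ pq ⟨i, hEq⟩
        have hceil : |f (x i) γ.1 - d γ pq|⁻¹ ≤ (FF i m0 : ℝ) := by
          rw [hm0, hFFenc i (γ, pq)]
          exact Nat.le_ceil _
        have hFFle : (FF i m0 : ℝ) ≤ (hh m0 : ℝ) := Nat.cast_le.mpr (hWh i hi m0)
        have h3 : |f (x i) γ.1 - d γ pq|⁻¹ ≤ (hh m0 : ℝ) + 1 := by linarith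
        have h4 : ((hh m0 : ℝ) + 1)⁻¹ ≤ (|f (x i) γ.1 - d γ pq|⁻¹)⁻¹ := by
          apply inv_anti₀ (inv_pos.mpr ht0) h3
        rwa [inv_inv] at h4
      exact fun z hz => closure_minimal hBin hcl hz
    have hneq : ∀ z ∈ L, ∀ (γ : ↥Γ') (pq : ℚ × ℚ), f z γ.1 ≠ d γ pq := by
      intro z hz γ pq hEq
      have h1 := hmargin γ pq z hz
      rw [hEq, sub_self, abs_zero] at h1
      have h2 : (0 : ℝ) < ((hh (Encodable.encode (γ, pq)) : ℝ) + 1)⁻¹ := by positivity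
      linarith
    have hoff : ∀ γ : Γ, γ ∉ Γ' → ∃ v : ℝ, ∀ z ∈ L, f z γ ∈ ({0, v} : Set ℝ) := by
      intro γ hγ
      have hvex : ∃ v : ℝ, ∀ i ∈ W, f (x i) γ ∈ ({0, v} : Set ℝ) := by
        by_cases hex : ∃ i ∈ W, f (x i) γ ≠ 0
        · obtain ⟨i1, hi1, hv1⟩ := hex
          refine ⟨f (x i1) γ, fun i hi => ?_⟩
          by_cases h0 : f (x i) γ = 0
          · exact Or.inl h0
          · by_cases hii : i = i1
            · rw [hii]; exact Or.inr rfl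
            · exact absurd ⟨hv1, hγ⟩
                (hdisj i (hWS₀ hi) i1 (hWS₀ hi1) hii γ ⟨h0, hγ⟩)
        · push_neg at hex
          exact ⟨0, fun i hi => Or.inl (hex i hi)⟩
      obtain ⟨v, hv⟩ := hvex
      have hcl : IsClosed {z : K | f z γ ∈ ({0, v} : Set ℝ)} := by
        have : ({0, v} : Set ℝ).Finite := (Set.finite_singleton v).insert 0
        exact this.isClosed.preimage (hcoord γ)
      have hBin : B ⊆ {z : K | f z γ ∈ ({0, v} : Set ℝ)} := by
        rintro _ ⟨i, hi, rfl⟩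
        exact hv i hi
      exact ⟨v, fun z hz => closure_minimal hBin hcl hz⟩
    refine ⟨L, isClosed_closure, ?_, ?_⟩
    · -- L is not metrizable
      intro hm
      haveI : CompactSpace ↥L := isCompact_iff_compactSpace.mp isClosed_closure.isCompact
      haveI := hm
      letI : PseudoMetricSpace ↥L := TopologicalSpace.pseudoMetrizableSpacePseudoMetric ↥L
      haveI : TopologicalSpace.SeparableSpace ↥L :=
        (TopologicalSpace.isSeparable_univ_iff).mp (isCompact_univ.isSeparable)
      haveI : SecondCountableTopology ↥L := UniformSpace.secondCountable_of_separable ↥L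
      set D : Set ↥L := {w : ↥L | w.1 ∈ B} with hD
      have hDdisc : ∀ w ∈ D, ∃ U : Set ↥L, IsOpen U ∧ U ∩ D = {w} := by
        rintro w hw
        obtain ⟨i, hi, hxi⟩ := hw
        obtain ⟨γi, hγi⟩ := hne i (hWS₀ hi)
        have habs : 0 < |f (x i) γi| := abs_pos.mpr hγi.1
        refine ⟨{w' : ↥L | |f (x i) γi| / 2 < |f w'.1 γi|}, ?_, ?_⟩
        · exact isOpen_lt continuous_const (((hcoord γi).comp continuous_subtype_val).abs)
        · ext w'
          constructor
          · rintro ⟨hw'U, hw'D⟩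
            obtain ⟨i', hi', hxi'⟩ := hw'D
            have hii : i' = i := by
              by_contra hne'
              have hz : f (x i') γi = 0 := by
                by_contra h0
                exact hdisj i (hWS₀ hi) i' (hWS₀ hi') (fun hE => hne' hE.symm) γi
                  hγi ⟨h0, hγi.2⟩
              rw [Set.mem_setOf_eq, ← hxi', hz, abs_zero] at hw'U
              linarith
            have : w'.1 = w.1 := by rw [← hxi, ← hxi', hii]
            exact Set.mem_singleton_iff.mpr (Subtype.ext this)
          · rintro rfl
            refine ⟨?_, ⟨i, hi, hxi⟩⟩
            show |f (x i) γi| / 2 < |f w'.1 γi|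
            rw [← hxi]
            linarith
      have hDc : D.Countable := aux_discrete_countable hDdisc
      have hBc : B.Countable := by
        have hBeq : B = Subtype.val '' D := by
          apply Set.Subset.antisymm
          · intro bb hbb
            exact ⟨⟨bb, hBL hbb⟩, hbb, rfl⟩
          · rintro _ ⟨w, hw, rfl⟩
            exact hw
        rw [hBeq]
        exact hDc.image _
      have hWc : W.Countable := by
        haveI := hBc.to_subtype
        have he : Function.Injective (fun i : ↥W => (⟨x i.1, Set.mem_image_of_mem x i.2⟩ : ↥B)) := by
          intro a b hab
          apply Subtype.ext
          exact hxinj (hWS₀ a.2) (hWS₀ b.2) (congrArg Subtype.val hab)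
        exact countable_coe_iff.mp he.countable
      exact hW hWc
    · -- L is zero-dimensional
      haveI : CompactSpace ↥L := isCompact_iff_compactSpace.mp isClosed_closure.isCompact
      have clopen_of : ∀ (φ : ↥L → ℝ) (c : ℝ), Continuous φ → (∀ w : ↥L, φ w ≠ c) →
          IsClopen {w : ↥L | φ w < c} := by
        intro φ c hφ hnec
        constructor
        · rw [← isOpen_compl_iff]
          have hcompl : {w : ↥L | φ w < c}ᶜ = {w : ↥L | c < φ w} := by
            ext w
            simp only [Set.mem_compl_iff, Set.mem_setOf_eq, not_lt]
            exact ⟨fun h1 => lt_of_le_of_ne h1 (Ne.symm (hnec w)), le_of_lt⟩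
          rw [hcompl]
          exact isOpen_lt continuous_const hφ
        · exact isOpen_lt hφ continuous_const
      have hsep : ∀ z z' : ↥L, z ≠ z' → ∃ U : Set ↥L, IsClopen U ∧ z ∈ U ∧ z' ∉ U := by
        intro z z' hzz'
        have hzz1 : z.1 ≠ z'.1 := fun h => hzz' (Subtype.ext h)
        have hfzz : ∃ γ : Γ, f z.1 γ ≠ f z'.1 γ := by
          by_contra h
          push_neg at h
          exact hzz1 (hf.injective (funext h))
        obtain ⟨γ, hγ⟩ := hfzz
        by_cases hγΓ' : γ ∈ Γ'
        · have hcont' : Continuous fun w : ↥L => f w.1 γ :=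
            (hcoord γ).comp continuous_subtype_val
          rcases lt_or_gt_of_ne hγ with hab | hab
          · obtain ⟨p, hp1, hp2⟩ := exists_rat_btwn hab
            obtain ⟨q, hq1, hq2⟩ := exists_rat_btwn hp2
            have hdIoo := hd2 ⟨γ, hγΓ'⟩ (p, q) hq1
            refine ⟨{w : ↥L | f w.1 γ < d ⟨γ, hγΓ'⟩ (p, q)},
              clopen_of _ _ hcont' (fun w => hneq w.1 w.2 ⟨γ, hγΓ'⟩ (p, q)), ?_, ?_⟩
            · exact lt_trans hp1 hdIoo.1
            · exact not_lt.mpr (le_of_lt (lt_trans hdIoo.2 hq2))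
          · obtain ⟨p, hp1, hp2⟩ := exists_rat_btwn hab
            obtain ⟨q, hq1, hq2⟩ := exists_rat_btwn hp2
            have hdIoo := hd2 ⟨γ, hγΓ'⟩ (p, q) hq1
            refine ⟨{w : ↥L | f w.1 γ < d ⟨γ, hγΓ'⟩ (p, q)}ᶜ,
              (clopen_of _ _ hcont' (fun w => hneq w.1 w.2 ⟨γ, hγΓ'⟩ (p, q))).compl, ?_, ?_⟩
            · exact not_lt.mpr (le_of_lt (lt_trans hdIoo.2 hq2))
            · intro hcon
              exact hcon (lt_trans hp1 hdIoo.1)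
        · obtain ⟨v, hv⟩ := hoff γ hγΓ'
          have hvz := hv z.1 z.2
          have hvz' := hv z'.1 z'.2
          simp only [Set.mem_insert_iff, Set.mem_singleton_iff] at hvz hvz'
          have hvne : v ≠ 0 := by
            intro h0
            rw [h0, or_self] at hvz hvz'
            exact hγ (hvz.trans hvz'.symm)
          have habs : 0 < |v| := abs_pos.mpr hvne
          have hnec : ∀ w : ↥L, |f w.1 γ| ≠ |v| / 2 := by
            intro w
            have hmem := hv w.1 w.2
            simp only [Set.mem_insert_iff, Set.mem_singleton_iff] at hmem
            rcases hmem with h0 | h0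
            · rw [h0, abs_zero]; intro hc; linarith
            · rw [h0]; intro hc; linarith
          have hφ : Continuous fun w : ↥L => |f w.1 γ| :=
            ((hcoord γ).comp continuous_subtype_val).abs
          have hUc := clopen_of _ (|v| / 2) hφ hnec
          rcases hvz with h0 | h0 <;> rcases hvz' with h1 | h1
          · exact absurd (h0.trans h1.symm) hγ
          · refine ⟨{w : ↥L | |f w.1 γ| < |v| / 2}, hUc, ?_, ?_⟩
            · show |f z.1 γ| < |v| / 2
              rw [h0, abs_zero]; linarith
            · show ¬(|f z'.1 γ| < |v| / 2)
              rw [h1]; push_neg; linarith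
          · refine ⟨{w : ↥L | |f w.1 γ| < |v| / 2}ᶜ, hUc.compl, ?_, ?_⟩
            · show ¬(|f z.1 γ| < |v| / 2)
              rw [h0]; push_neg; linarith
            · intro hcon
              apply hcon
              show |f z'.1 γ| < |v| / 2
              rw [h1, abs_zero]; linarith
          · exact absurd (h0.trans h1.symm) hγ
      haveI : TotallySeparatedSpace ↥L := by
        constructor
        intro z _ z' _ hzz'
        obtain ⟨U, hU, hzU, hz'U⟩ := hsep z z' hzz'
        exact ⟨U, Uᶜ, hU.2, hU.compl.2, hzU, hz'U, fun w _ => (em (w ∈ U)).imp id id,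
          disjoint_compl_right⟩
      exact ⟨{s : Set ↥L | IsClopen s}, fun U hU => hU, isTopologicalBasis_isClopen⟩
end
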